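/- arXiv:0809.3225 — 7 statements merged into one kernel-verified Lean document; each statement's English description precedes it below -/
import Mathlib

section
/- Let n ≥ 1 and let G ≤ S_n be an orbit homogeneous permutation group. Then for every stable multiaffine polynomial f ∈ ℂ[z_1,…,z_n], the polynomial T_G(f) = (1/|G|) ∑_{σ∈G} σ(f) is stable. -/
/-!
For multiaffine `f`, the polynomial `T_G f` is multiaffine, agrees with `f` at points constant on
the orbits of `G`, and, by orbit homogeneity, is invariant under every transposition inside an
orbit: on a squarefree monomial `z^A` such a transposition acts like an element of `G`.

Such a polynomial `h` is stable (a form of the Grace–Walsh–Szegő theorem). Induct on the number of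
coordinates of `x ∈ Hⁿ` that differ from the coordinate of a fixed representative of their orbit.
Merge one such coordinate `x_j` with the coordinates `T \ {j}` of its orbit that carry the
representative's value `u`, and let `q(t)` be `h` on the line where all coordinates in `T` equal
`t`; `q` has no zeros in `H` by induction. Affineness in `z_j` and symmetry give
`|T| h(x) = |T| q(u) + (x_j - u) q'(u)`, a polar derivative of `q`, which does not vanish by
Laguerre's argument: each `(u - α)⁻¹`, `α` a root of `q`, lies in the convex disk
`‖2 Im u · w + i‖ ≤ 1`, which contains `0`, hence so does `q'(u) / (|T| q(u))`; a zero of the polar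
derivative would put `1 / (u - x_j)` there, forcing `Im x_j ≤ 0`.
-/

open MvPolynomial
open scoped Classical

/-- A polynomial is stable if it is nonvanishing whenever all arguments lie in the
open upper half-plane `H = {z : ℂ | 0 < z.im}`. -/
def IsStable {σ : Type*} (f : MvPolynomial σ ℂ) : Prop :=
  ∀ x : σ → ℂ, (∀ i, 0 < (x i).im) → eval x f ≠ 0

/-- A polynomial is multiaffine if it has degree at most 1 in each variable. -/
def IsMultiaffine {σ : Type*} (f : MvPolynomial σ ℂ) : Prop :=
  ∀ i, degreeOf i f ≤ 1

/-- The `G`-symmetrizer `T_G = (1/|G|) ∑_{σ ∈ G} σ` applied to `f`. -/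
noncomputable def symmG {n : ℕ} (G : Subgroup (Equiv.Perm (Fin n)))
    (f : MvPolynomial (Fin n) ℂ) : MvPolynomial (Fin n) ℂ :=
  (Nat.card G : ℂ)⁻¹ • ∑ σ : G, rename (⇑(σ : Equiv.Perm (Fin n))) f

/-- `G` is orbit homogeneous: whenever two subsets `A, B` of `{1,…,n}` satisfy
`|A ∩ S| = |B ∩ S|` for every orbit `S` of `G`, some `σ ∈ G` maps `A` onto `B`. -/
def OrbitHomogeneous {n : ℕ} (G : Subgroup (Equiv.Perm (Fin n))) : Prop :=
  ∀ A B : Finset (Fin n),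
    (∀ i : Fin n, ((A : Set (Fin n)) ∩ MulAction.orbit G i).ncard
      = ((B : Set (Fin n)) ∩ MulAction.orbit G i).ncard) →
    ∃ σ ∈ G, A.image ⇑σ = B

open scoped Polynomial

theorem Polynomial.Splits.eval_derivative_eq_eval_mul_sum_inv {K : Type*} [Field K] {q : K[X]}
    (hq : q.Splits) {u : K} (hu : q.eval u ≠ 0) :
    q.derivative.eval u = q.eval u * (q.roots.map fun α => (u - α)⁻¹).sum := by
  have hroot : ∀ α ∈ q.roots, u - α ≠ 0 := fun α hα h => by
    rw [sub_eq_zero.mp h] at hu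
    exact hu (isRoot_of_mem_roots hα)
  rw [hq.eval_derivative, hq.eval_eq_prod_roots, mul_assoc]
  congr 1
  rw [← Multiset.sum_map_mul_left]
  refine congrArg _ (Multiset.map_congr rfl fun α hα => ?_)
  rw [← Multiset.prod_map_erase hα, mul_comm (u - α), mul_assoc, mul_inv_cancel₀ (hroot α hα),
    mul_one]

theorem Complex.norm_two_mul_div_add_I_le_one_iff {z : ℂ} (hz : z ≠ 0) {b : ℝ} (hb : 0 < b) :
    ‖2 * b / z + I‖ ≤ 1 ↔ b ≤ z.im := by
  have hz' : 0 < ‖z‖ := norm_pos_iff.mpr hz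
  rw [show 2 * b / z + I = (2 * b + I * z) / z by field_simp, norm_div, div_le_one hz',
    ← sq_le_sq₀ (norm_nonneg _) hz'.le, Complex.sq_norm, Complex.sq_norm]
  simp only [normSq_apply, add_re, mul_re, re_ofNat, ofReal_re, im_ofNat, ofReal_im, mul_zero,
    sub_zero, I_re, zero_mul, I_im, one_mul, zero_sub, add_im, mul_im, add_zero, zero_add]
  constructor <;> intro h <;> nlinarith

open Complex in
theorem Polynomial.natCast_mul_eval_add_mul_eval_derivative_ne_zero {q : ℂ[X]} {m : ℕ}
    (hm : 0 < m) (hdeg : q.natDegree ≤ m) (hq : ∀ t : ℂ, 0 < t.im → q.eval t ≠ 0) {u v : ℂ}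
    (hu : 0 < u.im) (hv : 0 < v.im) :
    m * q.eval u + (v - u) * q.derivative.eval u ≠ 0 := by
  intro h
  set ζ := (q.roots.map fun α => (u - α)⁻¹).sum
  have hζ : (m : ℂ) + (v - u) * ζ = 0 := by
    rw [(IsAlgClosed.splits q).eval_derivative_eq_eval_mul_sum_inv (hq u hu)] at h
    refine (mul_eq_zero.mp ?_).resolve_left (hq u hu)
    linear_combination h
  have huv : u - v ≠ 0 := fun h0 => by
    rw [← neg_sub, h0, neg_zero, zero_mul, add_zero, Nat.cast_eq_zero] at hζ
    omega
  have hroot : ∀ α ∈ q.roots, ‖2 * u.im / (u - α) + I‖ ≤ 1 := fun α hα => by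
    have hα : α.im ≤ 0 := not_lt.mp fun h => hq α h (isRoot_of_mem_roots hα)
    have hle : u.im ≤ (u - α).im := by rw [sub_im]; linarith
    exact (norm_two_mul_div_add_I_le_one_iff (fun h0 => by simp [h0] at hle; linarith) hu).mpr hle
  have hcard : q.roots.card ≤ m := (card_roots' q).trans hdeg
  have hdisk : ‖2 * u.im * ζ + m * I‖ ≤ m := calc
    ‖2 * u.im * ζ + m * I‖
        = ‖(q.roots.map fun α => 2 * u.im / (u - α) + I).sum
            + ((m - q.roots.card : ℕ) : ℂ) * I‖ := by
      rw [Multiset.sum_map_add, Multiset.map_const', Multiset.sum_replicate,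
        ← Multiset.sum_map_mul_left, Nat.cast_sub hcard, nsmul_eq_mul]
      simp only [div_eq_mul_inv]
      ring_nf
    _ ≤ (q.roots.map fun α => ‖2 * u.im / (u - α) + I‖).sum + (m - q.roots.card : ℕ) := by
      refine (norm_add_le _ _).trans (add_le_add ?_ (by simp))
      simpa [Multiset.map_map] using
        norm_multiset_sum_le (q.roots.map fun α => 2 * u.im / (u - α) + I)
    _ ≤ (q.roots.map fun _ => (1 : ℝ)).sum + (m - q.roots.card : ℕ) := by
      gcongr
      exact Multiset.sum_map_le_sum_map _ _ hroot
    _ = m := by simp [Nat.cast_sub hcard]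
  have hpole : ‖2 * u.im / (u - v) + I‖ ≤ 1 := by
    rw [show ζ = m / (u - v) by field_simp; linear_combination -hζ,
      show 2 * u.im * (m / (u - v)) + m * I = m * (2 * u.im / (u - v) + I) by ring,
      norm_mul, Complex.norm_natCast] at hdisk
    exact le_of_mul_le_mul_left (by simpa using hdisk) (by exact_mod_cast hm)
  have := (norm_two_mul_div_add_I_le_one_iff huv hu).mp hpole
  rw [sub_im] at this
  linarith

theorem Polynomial.eval_eq_eval_add_mul_eval_derivative {R : Type*} [CommRing R] {Q : R[X]}
    (hQ : Q.natDegree ≤ 1) (u v : R) :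
    Q.eval v = Q.eval u + (v - u) * Q.derivative.eval u := by
  rw [eq_X_add_C_of_natDegree_le_one hQ]
  simp only [eval_add, eval_mul, eval_C, eval_X, derivative_add, derivative_mul, derivative_C,
    zero_mul, derivative_X, mul_one, zero_add, add_zero]
  ring

namespace MvPolynomial

variable {ι : Type*}

section CommSemiring

variable {R : Type*} [CommSemiring R]

theorem derivative_aeval [Fintype ι] (g : ι → R[X]) (p : MvPolynomial ι R) :
    Polynomial.derivative (aeval g p)
      = ∑ i, aeval g (pderiv i p) * Polynomial.derivative (g i) := by
  induction p using MvPolynomial.induction_on with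
  | C a => simp
  | add p q hp hq => simp only [map_add, hp, hq, add_mul, Finset.sum_add_distrib]
  | mul_X p j hp =>
    simp only [map_mul, aeval_X, Polynomial.derivative_mul, hp, Finset.sum_mul, Derivation.leibniz,
      pderiv_X, smul_eq_mul, map_add, Pi.single_apply, add_mul, Finset.sum_add_distrib]
    simp [mul_right_comm, add_comm, mul_comm (g j)]

noncomputable def restrictLine (T : Finset ι) (x : ι → R) (p : MvPolynomial ι R) : R[X] :=
  aeval (T.piecewise (fun _ => Polynomial.X) fun i => Polynomial.C (x i)) p

theorem eval_restrictLine (T : Finset ι) (x : ι → R) (p : MvPolynomial ι R) (t : R) :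
    (restrictLine T x p).eval t = eval (T.piecewise (fun _ => t) x) p := by
  rw [restrictLine, ← Polynomial.coe_aeval_eq_eval, ← AlgHom.comp_apply, comp_aeval,
    ← aeval_eq_eval]
  congr 2
  funext i
  by_cases hi : i ∈ T <;> simp [hi]

theorem eval_derivative_restrictLine [Fintype ι] (T : Finset ι) (x : ι → R)
    (p : MvPolynomial ι R) (t : R) :
    (Polynomial.derivative (restrictLine T x p)).eval t
      = ∑ i ∈ T, eval (T.piecewise (fun _ => t) x) (pderiv i p) := by
  rw [restrictLine, derivative_aeval, Polynomial.eval_finsetSum,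
    ← Finset.sum_subset (Finset.subset_univ T) fun i _ hi => by simp [hi]]
  refine Finset.sum_congr rfl fun i hi => ?_
  simp [hi, ← eval_restrictLine, restrictLine]

theorem natDegree_restrictLine_le (T : Finset ι) (x : ι → R) {p : MvPolynomial ι R}
    (hp : ∀ i ∈ T, degreeOf i p ≤ 1) : (restrictLine T x p).natDegree ≤ T.card := by
  rw [restrictLine, p.as_sum, map_sum]
  refine Polynomial.natDegree_sum_le_of_forall_le _ _ fun d hd => ?_
  rw [aeval_monomial, Polynomial.algebraMap_eq, Finsupp.prod]
  refine (Polynomial.natDegree_C_mul_le _ _).trans ((Polynomial.natDegree_prod_le _ _).trans ?_)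
  calc ∑ i ∈ d.support, _ ≤ ∑ i ∈ d.support, if i ∈ T then 1 else 0 := by
        refine Finset.sum_le_sum fun i _ => ?_
        by_cases hi : i ∈ T
        · simpa [hi] using (Polynomial.natDegree_X_pow_le _).trans
            ((monomial_le_degreeOf i hd).trans (hp i hi))
        · rw [if_neg hi, Finset.piecewise_eq_of_notMem _ _ _ hi, ← Polynomial.C_pow,
            Polynomial.natDegree_C]
    _ = (d.support.filter (· ∈ T)).card := Finset.sum_boole _ _
    _ ≤ T.card := Finset.card_le_card fun i hi => (Finset.mem_filter.mp hi).2

theorem eval_pderiv_eq_of_rename_swap_eq {p : MvPolynomial ι R} {i j : ι}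
    (hp : rename (Equiv.swap i j) p = p) {x : ι → R} (hx : x i = x j) :
    eval x (pderiv i p) = eval x (pderiv j p) := by
  have h := pderiv_rename (Equiv.swap i j).injective j p
  rw [Equiv.swap_apply_right, hp] at h
  rw [h, eval_rename, Equiv.comp_swap_eq_update, hx, Function.update_eq_self, ← hx,
    Function.update_eq_self]

theorem coeff_rename_equiv {τ : Type*} (π : ι ≃ τ) (p : MvPolynomial ι R) (d : τ →₀ ℕ) :
    coeff d (rename π p) = coeff (d.equivMapDomain π.symm) p := by
  conv_lhs => rw [show d = (d.equivMapDomain π.symm).mapDomain π by ext; simp]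
  exact coeff_rename_mapDomain _ π.injective p _

end CommSemiring

theorem eval_update_eq_eval_add_mul_eval_pderiv {R : Type*} [CommRing R] [Fintype ι]
    {p : MvPolynomial ι R} {j : ι} (hp : degreeOf j p ≤ 1) (y : ι → R) (u v : R) :
    eval (Function.update y j v) p
      = eval (Function.update y j u) p + (v - u) * eval (Function.update y j u) (pderiv j p) := by
  have hQ := natDegree_restrictLine_le {j} y (p := p) (by simpa using hp)
  rw [Finset.card_singleton] at hQ
  have := Polynomial.eval_eq_eval_add_mul_eval_derivative hQ u v
  simpa [eval_restrictLine, eval_derivative_restrictLine, Finset.piecewise_singleton] using this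

end MvPolynomial

namespace Setoid

variable {ι α : Type*} [Fintype ι] (s : Setoid ι)

noncomputable def repMismatch (x : ι → α) : Finset ι :=
  Finset.univ.filter fun i => x i ≠ x (Quotient.mk s i).out

theorem card_repMismatch_piecewise_lt {x : ι → α} {j : ι} (hj : j ∈ s.repMismatch x) (t : α) :
    (s.repMismatch
        ((insert j (Finset.univ.filter fun i => s i j ∧ x i = x (Quotient.mk s j).out)).piecewise
          (fun _ => t) x)).card
      < (s.repMismatch x).card := by
  set T := insert j (Finset.univ.filter fun i => s i j ∧ x i = x (Quotient.mk s j).out)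
  have hrep (i : ι) : s (Quotient.mk s i).out i := Quotient.mk_out i
  have hrep_eq {i k : ι} (hik : s i k) : (Quotient.mk s i).out = (Quotient.mk s k).out :=
    congrArg Quotient.out (Quotient.sound hik)
  have hT {i : ι} (hi : i ∈ T) : s i j := by
    rcases Finset.mem_insert.mp hi with rfl | hi
    · exact s.refl' i
    · exact (Finset.mem_filter.mp hi).2.1
  have hmemT {i : ι} (hij : s i j) (hxi : x i = x (Quotient.mk s j).out) : i ∈ T :=
    Finset.mem_insert_of_mem (Finset.mem_filter.mpr ⟨Finset.mem_univ i, hij, hxi⟩)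
  refine (Finset.card_le_card fun i hi => ?_).trans_lt (Finset.card_erase_lt_of_mem hj)
  replace hi := (Finset.mem_filter.mp hi).2
  have hiT : i ∉ T := fun hiT => hi <| by
    have hij := hT hiT
    rw [Finset.piecewise_eq_of_mem _ _ _ hiT, Finset.piecewise_eq_of_mem _ _ _
      (hmemT (s.trans' (hrep i) hij) (by rw [hrep_eq hij]))]
  refine Finset.mem_erase.mpr ⟨fun hij => hiT (hij ▸ Finset.mem_insert_self j _),
    Finset.mem_filter.mpr ⟨Finset.mem_univ i, fun hxi => hi ?_⟩⟩
  have hrepT : (Quotient.mk s i).out ∉ T := fun hr => by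
    have hij := s.trans' (s.symm' (hrep i)) (hT hr)
    exact hiT (hmemT hij (by rw [hxi, hrep_eq hij]))
  rw [Finset.piecewise_eq_of_notMem _ _ _ hiT, Finset.piecewise_eq_of_notMem _ _ _ hrepT, hxi]

end Setoid

namespace IsMultiaffine

variable {ι : Type*}

theorem rename_equiv {f : MvPolynomial ι ℂ} (hf : IsMultiaffine f) (π : Equiv.Perm ι) :
    IsMultiaffine (rename π f) := fun i => by
  simpa using (degreeOf_rename_of_injective (p := f) π.injective (π.symm i)).trans_le (hf _)

theorem coeff_eq_zero {f : MvPolynomial ι ℂ} (hf : IsMultiaffine f) {d : ι →₀ ℕ} {k : ι}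
    (hk : 2 ≤ d k) : coeff d f = 0 := by
  by_contra hd
  have := (monomial_le_degreeOf k (mem_support_iff.mpr hd)).trans (hf k)
  omega

theorem symmG {n : ℕ} {f : MvPolynomial (Fin n) ℂ} (hf : IsMultiaffine f)
    (G : Subgroup (Equiv.Perm (Fin n))) : IsMultiaffine (symmG G f) := fun i => by
  rw [_root_.symmG, smul_eq_C_mul]
  refine (degreeOf_C_mul_le _ _ _).trans ((degreeOf_sum_le _ _ _).trans ?_)
  exact Finset.sup_le fun σ _ => hf.rename_equiv σ i

variable [Fintype ι] {h : MvPolynomial ι ℂ}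

theorem eval_ne_zero_of_forall_piecewise (hh : IsMultiaffine h) {T : Finset ι} {j : ι}
    (hj : j ∈ T) (hsymm : ∀ i ∈ T, rename (Equiv.swap i j) h = h) {x : ι → ℂ} {u : ℂ}
    (hu : 0 < u.im) (hxj : 0 < (x j).im) (hxT : ∀ i ∈ T, i ≠ j → x i = u)
    (hline : ∀ t : ℂ, 0 < t.im → eval (T.piecewise (fun _ => t) x) h ≠ 0) :
    eval x h ≠ 0 := by
  set xu := T.piecewise (fun _ => u) x
  have hxu_j : xu j = u := Finset.piecewise_eq_of_mem _ _ _ hj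
  have hx : x = Function.update xu j (x j) := by
    ext i
    by_cases hij : i = j
    · simp [hij]
    · by_cases hi : i ∈ T
      · simp [hij, xu, hi, hxT i hi hij]
      · simp [hij, xu, hi]
  have htaylor : eval x h = (restrictLine T x h).eval u + (x j - u) * eval xu (pderiv j h) := by
    conv_lhs => rw [hx]
    rw [eval_update_eq_eval_add_mul_eval_pderiv (hh j), ← hxu_j, Function.update_eq_self, hxu_j,
      eval_restrictLine]
  have hderiv : (Polynomial.derivative (restrictLine T x h)).eval u
      = T.card * eval xu (pderiv j h) := by
    rw [eval_derivative_restrictLine, ← nsmul_eq_mul, ← Finset.sum_const]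
    refine Finset.sum_congr rfl fun i hi => eval_pderiv_eq_of_rename_swap_eq (hsymm i hi) ?_
    rw [Finset.piecewise_eq_of_mem _ _ _ hi]
    exact hxu_j.symm
  intro h0
  refine Polynomial.natCast_mul_eval_add_mul_eval_derivative_ne_zero (Finset.card_pos.mpr ⟨j, hj⟩)
    (natDegree_restrictLine_le T x fun i _ => hh i) (fun t ht => ?_) hu hxj ?_
  · rw [eval_restrictLine]
    exact hline t ht
  · rw [hderiv]
    linear_combination (T.card : ℂ) * (htaylor.symm.trans h0)

theorem isStable_of_classwise_symmetric (hh : IsMultiaffine h) (s : Setoid ι)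
    (hsymm : ∀ i j, s i j → rename (Equiv.swap i j) h = h)
    (hdiag : ∀ x : ι → ℂ, (∀ i, 0 < (x i).im) → (∀ i j, s i j → x i = x j) → eval x h ≠ 0) :
    IsStable h := by
  suffices H : ∀ N (x : ι → ℂ), (s.repMismatch x).card = N → (∀ i, 0 < (x i).im) →
      eval x h ≠ 0 from fun x hx => H _ x rfl hx
  intro N
  induction N using Nat.strong_induction_on with
  | _ N IH =>
  intro x hN hx
  rcases (s.repMismatch x).eq_empty_or_nonempty with hgood | ⟨j, hj⟩
  · have hconst (i : ι) : x i = x (Quotient.mk s i).out := by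
      simpa using Finset.filter_eq_empty_iff.mp hgood (Finset.mem_univ i)
    refine hdiag x hx fun i j hij => ?_
    rw [hconst i, hconst j, Quotient.sound hij]
  set u := x (Quotient.mk s j).out
  set T := insert j (Finset.univ.filter fun i => s i j ∧ x i = u)
  have hT {i : ι} (hi : i ∈ T) (hij : i ≠ j) : s i j ∧ x i = u :=
    (Finset.mem_filter.mp ((Finset.mem_insert.mp hi).resolve_left hij)).2
  refine eval_ne_zero_of_forall_piecewise hh (Finset.mem_insert_self j _) (fun i hi => ?_)
    (hx _) (hx j) (fun i hi hij => (hT hi hij).2) fun t ht => ?_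
  · rcases eq_or_ne i j with rfl | hij
    · exact hsymm i i (s.refl' i)
    · exact hsymm i j (hT hi hij).1
  refine IH _ (hN ▸ s.card_repMismatch_piecewise_lt hj t) _ rfl fun i => ?_
  by_cases hi : i ∈ T
  · rw [Finset.piecewise_eq_of_mem _ _ _ hi]
    exact ht
  · rw [Finset.piecewise_eq_of_notMem _ _ _ hi]
    exact hx i

end IsMultiaffine

theorem MulAction.swap_apply_mem_orbit {G α : Type*} [Group G] [MulAction G α] {i j : α}
    (hij : i ∈ orbit G j) (k : α) : Equiv.swap i j k ∈ orbit G k := by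
  rcases eq_or_ne k i with rfl | hki
  · rwa [Equiv.swap_apply_left, mem_orbit_symm]
  rcases eq_or_ne k j with rfl | hkj
  · rwa [Equiv.swap_apply_right]
  rw [Equiv.swap_apply_of_ne_of_ne hki hkj]
  exact mem_orbit_self k

theorem eval_symmG_of_forall_eq {n : ℕ} (G : Subgroup (Equiv.Perm (Fin n)))
    (f : MvPolynomial (Fin n) ℂ) {x : Fin n → ℂ} (hx : ∀ σ ∈ G, ∀ i, x (σ i) = x i) :
    eval x (symmG G f) = eval x f := by
  have hcard : (Nat.card G : ℂ) ≠ 0 := Nat.cast_ne_zero.mpr Nat.card_pos.ne'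
  simp only [symmG, smul_eq_C_mul, eval_mul, eval_C, map_sum, eval_rename]
  rw [Finset.sum_congr rfl fun σ _ => congrArg (eval · f) (funext (hx σ.1 σ.2)),
    Finset.sum_const, Finset.card_univ, ← Nat.card_eq_fintype_card, nsmul_eq_mul,
    inv_mul_cancel_left₀ hcard]

namespace OrbitHomogeneous

variable {n : ℕ} {G : Subgroup (Equiv.Perm (Fin n))} {τ : Equiv.Perm (Fin n)}

theorem exists_apply_eq (hG : OrbitHomogeneous G) (hτ : ∀ i, τ i ∈ MulAction.orbit G i)
    {e : Fin n →₀ ℕ} (he : ∀ k, e k ≤ 1) : ∃ σ ∈ G, ∀ k, e (τ k) = e (σ k) := by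
  have hO (i : Fin n) : τ.symm '' MulAction.orbit G i = MulAction.orbit G i := by
    ext x
    rw [Equiv.image_symm_eq_preimage, Set.mem_preimage, ← MulAction.orbit_eq_iff,
      MulAction.orbit_eq_iff.mpr (hτ x), MulAction.orbit_eq_iff]
  obtain ⟨σ, hσ, himage⟩ := hG (e.support.image τ.symm) e.support fun i => by
    rw [Finset.coe_image]
    conv_lhs => rw [← hO i]
    rw [← Set.image_inter τ.symm.injective, Set.ncard_image_of_injective _ τ.symm.injective]
  refine ⟨σ, hσ, fun k => ?_⟩
  have hsupp : τ k ∈ e.support ↔ σ k ∈ e.support := by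
    conv_rhs => rw [← himage]
    rw [σ.injective.mem_finset_image, ← τ.symm.injective.mem_finset_image, Equiv.symm_apply_apply]
  simp only [Finsupp.mem_support_iff] at hsupp
  have := he (τ k)
  have := he (σ k)
  omega

theorem rename_symmG (hG : OrbitHomogeneous G) (hτ : ∀ i, τ i ∈ MulAction.orbit G i)
    {f : MvPolynomial (Fin n) ℂ} (hf : IsMultiaffine f) :
    rename τ (symmG G f) = symmG G f := by
  ext e
  obtain ⟨g, hcoeff⟩ : ∃ g : G, ∀ σ : G,
      coeff e (rename (τ * (σ : Equiv.Perm (Fin n))) f)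
        = coeff e (rename ((g * σ : G) : Equiv.Perm (Fin n)) f) := by
    by_cases he : ∀ k, e k ≤ 1
    · obtain ⟨σ₀, hσ₀, he'⟩ := hG.exists_apply_eq hτ he
      refine ⟨⟨σ₀, hσ₀⟩, fun σ => ?_⟩
      rw [coeff_rename_equiv, coeff_rename_equiv]
      congr 1
      ext k
      simp [he']
    · obtain ⟨k, hk⟩ := not_forall.mp he
      replace hk : 2 ≤ e k := not_le.mp hk
      exact ⟨1, fun σ => by
        rw [(hf.rename_equiv _).coeff_eq_zero hk, (hf.rename_equiv _).coeff_eq_zero hk]⟩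
  simp only [symmG, map_smul, coeff_smul, map_sum, coeff_sum, rename_rename]
  refine congrArg _ ?_
  calc ∑ σ : G, coeff e (rename (τ ∘ σ) f)
        = ∑ σ : G, coeff e (rename ((g * σ : G) : Equiv.Perm (Fin n)) f) :=
        Finset.sum_congr rfl fun σ _ => hcoeff σ
    _ = ∑ σ : G, coeff e (rename σ f) :=
        Equiv.sum_comp (Equiv.mulLeft g) fun σ : G => coeff e (rename (σ : Equiv.Perm (Fin n)) f)

end OrbitHomogeneous

theorem orbit_homogeneous_symmetrizer_preserves_stability_general
    (n : ℕ) (G : Subgroup (Equiv.Perm (Fin n)))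
    (hG : OrbitHomogeneous G) :
    ∀ f : MvPolynomial (Fin n) ℂ, IsMultiaffine f → IsStable f →
      IsStable (symmG G f) := by
  intro f hf hstable
  refine (hf.symmG G).isStable_of_classwise_symmetric (MulAction.orbitRel G (Fin n))
    (fun i j hij => hG.rename_symmG (MulAction.swap_apply_mem_orbit hij) hf)
    fun x hx hconst => ?_
  rw [eval_symmG_of_forall_eq G f fun σ hσ i => hconst _ _ (MulAction.mem_orbit i (⟨σ, hσ⟩ : G))]
  exact hstable x hx

/-- If G is orbit homogeneous then the G-symmetrizer preserves stability of
multiaffine polynomials. -/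
theorem orbit_homogeneous_symmetrizer_preserves_stability
    (n : ℕ) (hn : 1 ≤ n) (G : Subgroup (Equiv.Perm (Fin n)))
    (hG : OrbitHomogeneous G) :
    ∀ f : MvPolynomial (Fin n) ℂ, IsMultiaffine f → IsStable f →
      IsStable (symmG G f) :=
  orbit_homogeneous_symmetrizer_preserves_stability_general n G hG
end

section
/- Let n ≥ 1 and let {c_σ : σ ∈ S_n} be complex numbers. The multiaffine polynomial P(z_1,…,z_n,w_1,…,w_n) = ∑_{σ∈S_n} c_σ ∏_{j=1}^n (z_{σ(j)} − w_j) is Grace-like if and only if the polynomial Q(z_1,…,z_n,w_1,…,w_n) = ∑_{σ∈S_n} c_σ ∏_{j=1}^n (z_{σ(j)} + w_j) is stable. -/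
open MvPolynomial
open scoped Classical

/-- A multiaffine polynomial `P(z,w)` (in variables indexed by `Fin n ⊕ Fin n`,
`Sum.inl` for the z's and `Sum.inr` for the w's) is Grace-like if it is nonvanishing
whenever the points z₁,…,zₙ are strictly separated from w₁,…,wₙ by a circle of the
Riemann sphere, i.e. whenever some Möbius transformation φ(z) = (az+b)/(cz+d),
ad - bc ≠ 0, sends all zᵢ into the open upper half-plane and all wⱼ into the open
lower half-plane. -/
def GraceLike {n : ℕ} (P : MvPolynomial (Fin n ⊕ Fin n) ℂ) : Prop :=
  ∀ z w : Fin n → ℂ,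
    (∃ a b c d : ℂ, a * d - b * c ≠ 0 ∧
      (∀ i, 0 < ((a * z i + b) / (c * z i + d)).im) ∧
      (∀ j, ((a * w j + b) / (c * w j + d)).im < 0)) →
    eval (Sum.elim z w) P ≠ 0

/-!
`Q(z, w) = P(z, -w)`, so stability of `Q` is the Grace-like condition for the identity
map. Conversely, for `φ(t) = (at + b)/(ct + d)` one has
`φ(x) - φ(y) = (ad - bc)(x - y)/((cx + d)(cy + d))`, and each term of `P` contains every
`zᵢ` and every `wⱼ` exactly once, so `P(φ z, φ w)` is a multiple of `P(z, w)`. Hence a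
zero of `P` separated by `φ` gives the zero `(φ z, -φ w)` of `Q` in the upper half-plane.
-/

section Mobius

variable (a b c d : ℂ)

lemma mobius_sub_mobius {x y : ℂ} (hx : c * x + d ≠ 0) (hy : c * y + d ≠ 0) :
    (a * x + b) / (c * x + d) - (a * y + b) / (c * y + d)
      = (a * d - b * c) * (x - y) / ((c * x + d) * (c * y + d)) := by
  rw [div_sub_div _ _ hx hy]
  ring

variable {a b c d}

lemma mobius_denom_ne_zero_of_im_ne_zero {t : ℂ} (h : ((a * t + b) / (c * t + d)).im ≠ 0) :
    c * t + d ≠ 0 := by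
  rintro h0
  simp [h0] at h

variable {ι : Type*} [Fintype ι] [DecidableEq ι]

lemma sum_perm_prod_mobius_sub (coef : Equiv.Perm ι → ℂ) {z w : ι → ℂ}
    (hz : ∀ i, c * z i + d ≠ 0) (hw : ∀ j, c * w j + d ≠ 0) :
    ∑ σ : Equiv.Perm ι, coef σ * ∏ j, ((a * z (σ j) + b) / (c * z (σ j) + d)
        - (a * w j + b) / (c * w j + d))
      = (a * d - b * c) ^ Fintype.card ι / ((∏ i, (c * z i + d)) * ∏ j, (c * w j + d)) *
        ∑ σ : Equiv.Perm ι, coef σ * ∏ j, (z (σ j) - w j) := by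
  rw [Finset.mul_sum]
  refine Finset.sum_congr rfl fun σ _ => ?_
  simp only [mobius_sub_mobius a b c d (hz _) (hw _), Finset.prod_div_distrib,
    Finset.prod_mul_distrib, Finset.prod_const, Finset.card_univ,
    Equiv.prod_comp σ (fun i => c * z i + d)]
  ring

end Mobius

section PermSum

variable {ι : Type*} [Fintype ι] [DecidableEq ι] (coef : Equiv.Perm ι → ℂ) (z w : ι → ℂ)

lemma eval_sum_perm_prod_X_sub_X :
    eval (Sum.elim z w) (∑ σ : Equiv.Perm ι, coef σ • ∏ j : ι,
        (X (Sum.inl (σ j)) - X (Sum.inr j) : MvPolynomial (ι ⊕ ι) ℂ))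
      = ∑ σ : Equiv.Perm ι, coef σ * ∏ j, (z (σ j) - w j) := by
  simp [smul_eq_C_mul]

lemma eval_sum_perm_prod_X_add_X :
    eval (Sum.elim z w) (∑ σ : Equiv.Perm ι, coef σ • ∏ j : ι,
        (X (Sum.inl (σ j)) + X (Sum.inr j) : MvPolynomial (ι ⊕ ι) ℂ))
      = ∑ σ : Equiv.Perm ι, coef σ * ∏ j, (z (σ j) - -w j) := by
  simp [smul_eq_C_mul]

end PermSum

theorem graceLike_iff_stable_general (n : ℕ) (c : Equiv.Perm (Fin n) → ℂ) :
    GraceLike (∑ σ : Equiv.Perm (Fin n), c σ • ∏ j : Fin n,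
        (X (Sum.inl (σ j)) - X (Sum.inr j) : MvPolynomial (Fin n ⊕ Fin n) ℂ)) ↔
    IsStable (∑ σ : Equiv.Perm (Fin n), c σ • ∏ j : Fin n,
        (X (Sum.inl (σ j)) + X (Sum.inr j) : MvPolynomial (Fin n ⊕ Fin n) ℂ)) := by
  constructor
  · intro hP x hx
    have hid := hP (x ∘ Sum.inl) (-(x ∘ Sum.inr))
      ⟨1, 0, 0, 1, by norm_num, by simpa using fun i => hx (Sum.inl i),
        by simpa using fun j => hx (Sum.inr j)⟩
    rw [eval_sum_perm_prod_X_sub_X] at hid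
    rwa [← Sum.elim_comp_inl_inr x, eval_sum_perm_prod_X_add_X]
  · rintro hQ z w ⟨a, b, c', d, -, hz, hw⟩
    have hzd i := mobius_denom_ne_zero_of_im_ne_zero (hz i).ne'
    have hwd j := mobius_denom_ne_zero_of_im_ne_zero (hw j).ne
    have hφ := hQ (Sum.elim (fun i => (a * z i + b) / (c' * z i + d))
      (fun j => -((a * w j + b) / (c' * w j + d))))
      (by rintro (i | j) <;> simp [hz, hw])
    rw [eval_sum_perm_prod_X_add_X] at hφ
    simp only [neg_neg] at hφ
    rw [sum_perm_prod_mobius_sub c hzd hwd] at hφ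
    rw [eval_sum_perm_prod_X_sub_X]
    exact right_ne_zero_of_mul hφ

/-- `P = ∑_σ c_σ ∏_j (z_{σ(j)} - w_j)` is Grace-like iff
`Q = ∑_σ c_σ ∏_j (z_{σ(j)} + w_j)` is stable. -/
theorem graceLike_iff_stable (n : ℕ) (hn : 1 ≤ n) (c : Equiv.Perm (Fin n) → ℂ) :
    GraceLike (∑ σ : Equiv.Perm (Fin n), c σ • ∏ j : Fin n,
        (X (Sum.inl (σ j)) - X (Sum.inr j) : MvPolynomial (Fin n ⊕ Fin n) ℂ)) ↔
    IsStable (∑ σ : Equiv.Perm (Fin n), c σ • ∏ j : Fin n,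
        (X (Sum.inl (σ j)) + X (Sum.inr j) : MvPolynomial (Fin n ⊕ Fin n) ℂ)) :=
  graceLike_iff_stable_general n c
end

section
/- Let n ≥ 1 and let M_n denote the space of multiaffine complex polynomials in variables z_1,…,z_n. Let T : M_n → M_n be a linear transformation whose image has dimension at least 2. Then T maps every stable polynomial in M_n to a stable polynomial or to the zero polynomial if and only if the polynomial T(∏_{i=1}^n (z_i + w_i)) ∈ ℂ[z_1,…,z_n,w_1,…,w_n] (where T acts on the z-variables, treating the w_i as coefficients) is stable in the 2n variables z_1,…,z_n,w_1,…,w_n. -/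
open MvPolynomial
open scoped Classical

/-- The space `M_n` of multiaffine complex polynomials in `n` variables, i.e. those of
degree at most 1 in each variable, as a submodule of `ℂ[z₁,…,zₙ]`. -/
noncomputable def MultiaffineSubmodule (n : ℕ) : Submodule ℂ (MvPolynomial (Fin n) ℂ) where
  carrier := {f | ∀ i, degreeOf i f ≤ 1}
  add_mem' := fun hf hg i =>
    le_trans (degreeOf_add_le i _ _) (max_le (hf i) (hg i))
  zero_mem' := fun i => by simp
  smul_mem' := fun c f hf i => by
    rw [smul_eq_C_mul]
    calc degreeOf i (C c * f) ≤ degreeOf i (C c : MvPolynomial (Fin n) ℂ) + degreeOf i f :=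
          degreeOf_mul_le i _ _
      _ ≤ degreeOf i f := by simp
      _ ≤ 1 := hf i

/-- The multiaffine monomial `z^S = ∏_{i ∈ S} z_i` lies in `M_n`. -/
lemma prodX_mem_multiaffine {n : ℕ} (S : Finset (Fin n)) :
    (∏ j ∈ S, (X j : MvPolynomial (Fin n) ℂ)) ∈ MultiaffineSubmodule n := by
  intro i
  refine le_trans (degreeOf_prod_le i S _) ?_
  have : ∀ j ∈ S, degreeOf i (X j : MvPolynomial (Fin n) ℂ) = if i = j then 1 else 0 :=
    fun j _ => degreeOf_X i j
  rw [Finset.sum_congr rfl this, Finset.sum_ite_eq]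
  split <;> simp

/-! Necessity: for `w ∈ Hⁿ` the polynomial `∏ (zᵢ + wᵢ)` is stable, and `T` maps it to the
symbol specialised at `w`, so the symbol can only vanish at a point of `H²ⁿ` if
`T (∏ (zᵢ + wᵢ)) = 0`. In that case `T` sends every `g` to a stable polynomial or to zero, since
`∏ (zᵢ + wᵢ) + ε g` is still stable for small `ε ≠ 0` (on `Hⁿ`, `|g|` is at most a constant
times `|∏ (zᵢ + wᵢ)|`) and is mapped to `ε T g`. This is impossible when the image of `T` has
dimension at least two: for independent `p`, `q` and `x ∈ Hⁿ` with `p x ≠ 0`, the nonzero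
polynomial `p(x) q - q(x) p` vanishes at `x`.

Sufficiency: if `f` is stable, so is `symbol(z, w) f(v)`, and `T f (z)` is obtained from it by
contracting, for each `j`, the pair `(w_j, v_j)`: `A + w_j B + v_j C + w_j v_j D ↦ B + C`.
Contraction preserves stability: the top coefficient `D` is zero or stable, and on the diagonal
`w = v` we get a quadratic `A + (B + C) w + D w²` without roots in `H`, so the midpoint
`-(B + C) / 2D` of its roots lies in the closed lower half-plane, i.e. `(B + C) + 2 w D` has no
zeros in `H`; Hurwitz's theorem (a consequence of the open mapping theorem) then lets us put
`w = 0`. -/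

open Complex Filter Topology

section Stability

variable {σ τ : Type*}

theorem IsStable.mul {p q : MvPolynomial σ ℂ} (hp : IsStable p) (hq : IsStable q) :
    IsStable (p * q) := fun x hx => by
  rw [map_mul]
  exact mul_ne_zero (hp x hx) (hq x hx)

theorem IsStable.rename {p : MvPolynomial σ ℂ} (hp : IsStable p) (g : σ → τ) :
    IsStable (rename g p) := fun x hx => by
  rw [eval_rename]
  exact hp _ fun i => hx (g i)

theorem isStable_rename_iff {p : MvPolynomial σ ℂ} {g : σ → τ} (hg : g.Injective) :
    IsStable (rename g p) ↔ IsStable p := by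
  refine ⟨fun hp x hx => ?_, fun hp => hp.rename g⟩
  have hext : ∀ k, 0 < (Function.extend g x (fun _ => I) k).im := fun k => by
    by_cases hk : ∃ i, g i = k
    · obtain ⟨i, rfl⟩ := hk
      simpa [hg.extend_apply] using hx i
    · simp [Function.extend_apply' _ _ _ hk]
  simpa [eval_rename, Function.extend_comp hg] using hp _ hext

theorem isStable_smul_iff {p : MvPolynomial σ ℂ} {c : ℂ} (hc : c ≠ 0) :
    IsStable (c • p) ↔ IsStable p := by
  simp only [IsStable, smul_eval, mul_ne_zero_iff, ne_eq, hc, not_false_eq_true, true_and]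

theorem exists_forall_im_pos_eval_ne_zero {p : MvPolynomial σ ℂ} (hp : p ≠ 0) :
    ∃ x : σ → ℂ, (∀ i, 0 < (x i).im) ∧ eval x p ≠ 0 := by
  have hH : {z : ℂ | 0 < z.im}.Infinite :=
    ((Set.Ioi_infinite (0 : ℝ)).image (fun _ _ _ _ h => by simpa using h :
      Set.InjOn (fun t : ℝ => (t : ℂ) * I) _)).mono (by rintro _ ⟨t, ht, rfl⟩; simpa using ht)
  by_contra! h
  exact hp (funext_set (fun _ => {z : ℂ | 0 < z.im}) (fun _ => hH) fun x hx =>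
    by simpa using h x fun i => hx i trivial)

end Stability

theorem analyticOnNhd_eval_add_mul {σ : Type*} (p : MvPolynomial σ ℂ) (a b : σ → ℂ) :
    AnalyticOnNhd ℂ (fun s => eval (fun j => a j + s * b j) p) Set.univ :=
  AnalyticOnNhd.aeval_mvPolynomial
    (fun _ => analyticOnNhd_const.add (analyticOnNhd_id.mul analyticOnNhd_const)) p

theorem exists_im_pos_of_mem_nhds_zero {U : Set ℂ} (hU : U ∈ 𝓝 0) : ∃ w ∈ U, 0 < w.im := by
  have hlim : Tendsto (fun t : ℝ => (t : ℂ) * I) (𝓝[>] 0) (𝓝 0) :=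
    ((by fun_prop : Continuous fun t : ℝ => (t : ℂ) * I).tendsto' 0 0 (by simp)).mono_left
      nhdsWithin_le_nhds
  obtain ⟨t, htU, ht⟩ := ((hlim.eventually hU).and self_mem_nhdsWithin).exists
  exact ⟨_, htU, by simpa using ht⟩

section Hurwitz

variable {σ : Type*} [Finite σ]

theorem eq_zero_or_isStable_const_of_add_mul {P Q : MvPolynomial σ ℂ}
    (h : ∀ x : σ → ℂ, (∀ i, 0 < (x i).im) → ∀ w : ℂ, 0 < w.im →
      eval x P + w * eval x Q ≠ 0) :
    P = 0 ∨ IsStable P := by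
  refine or_iff_not_imp_left.2 fun hP x₀ hx₀ hPx₀ => ?_
  obtain ⟨x₁, hPx₁⟩ : ∃ x₁, eval x₁ P ≠ 0 := by
    by_contra! hzero
    exact hP (MvPolynomial.funext fun x => by simpa using hzero x)
  have hQx₀ : eval x₀ Q ≠ 0 := fun hQ => h x₀ hx₀ I (by simp) (by simp [hPx₀, hQ])
  set ℓ : ℂ → σ → ℂ := fun s j => x₀ j + s * (x₁ j - x₀ j)
  have hgood : ∀ᶠ s in 𝓝 (0 : ℂ), (∀ j, 0 < (ℓ s j).im) ∧ eval (ℓ s) Q ≠ 0 := by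
    refine (eventually_all.2 fun j => ?_).and ?_
    · exact (continuous_im.comp (by fun_prop : Continuous (ℓ · j))).continuousAt.eventually
        (lt_mem_nhds (by simpa [ℓ] using hx₀ j))
    · exact (analyticOnNhd_eval_add_mul Q _ _ 0 trivial).continuousAt.eventually_ne
        (by simpa [ℓ] using hQx₀)
  -- `φ s` is the value of `w` for which `P + w Q` vanishes at `ℓ s`
  set φ : ℂ → ℂ := fun s => -eval (ℓ s) P / eval (ℓ s) Q
  have hφ₀ : φ 0 = 0 := by simp [φ, ℓ, hPx₀]
  have hφ : AnalyticAt ℂ φ 0 := (analyticOnNhd_eval_add_mul P _ _ 0 trivial).neg.div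
    (analyticOnNhd_eval_add_mul Q _ _ 0 trivial) (by simpa [ℓ] using hQx₀)
  rcases hφ.eventually_constant_or_nhds_le_map_nhds with hconst | hopen
  · have hPℓ : ∀ᶠ s in 𝓝 (0 : ℂ), eval (ℓ s) P = 0 := by
      filter_upwards [hconst, hgood] with s hs hsg
      simpa [φ, hφ₀, hsg.2] using hs
    have := (analyticOnNhd_eval_add_mul P _ _).eqOn_zero_of_preconnected_of_eventuallyEq_zero
      isPreconnected_univ (Set.mem_univ 0) hPℓ (Set.mem_univ 1)
    exact hPx₁ (by simpa [ℓ] using this)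
  · rw [hφ₀] at hopen
    obtain ⟨_, ⟨s, ⟨hsH, hsQ⟩, rfl⟩, hw⟩ := exists_im_pos_of_mem_nhds_zero
      (hopen (image_mem_map hgood))
    refine h (ℓ s) hsH (φ s) hw ?_
    simp only [φ]
    field_simp
    ring

theorem eq_zero_or_isStable_coeff_of_add_mul {P Q : MvPolynomial σ ℂ}
    (h : ∀ x : σ → ℂ, (∀ i, 0 < (x i).im) → ∀ w : ℂ, 0 < w.im →
      eval x P + w * eval x Q ≠ 0) :
    Q = 0 ∨ IsStable Q := by
  -- `w ↦ -w⁻¹` maps the upper half-plane to itself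
  refine eq_zero_or_isStable_const_of_add_mul (Q := -P) fun x hx w hw hzero => ?_
  have hw₀ : w ≠ 0 := by rintro rfl; simp at hw
  refine h x hx (-w⁻¹) ?_ ?_
  · simpa [neg_div] using div_pos hw (normSq_pos.2 hw₀)
  · rw [map_neg] at hzero
    field_simp
    linear_combination -hzero

end Hurwitz

theorem add_mul_ne_zero_of_quadratic {a b c w : ℂ} (ha : a ≠ 0)
    (h : ∀ z : ℂ, 0 < z.im → a * (z * z) + b * z + c ≠ 0) (hw : 0 < w.im) :
    b + 2 * a * w ≠ 0 := by
  -- `-b / (2a)` is the midpoint of the two roots, which lie in the closed lower half-plane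
  obtain ⟨s, hs⟩ := IsAlgClosed.exists_eq_mul_self (discrim a b c)
  have hroot : ∀ z, a * (z * z) + b * z + c = 0 → z.im ≤ 0 := fun z hz =>
    not_lt.1 fun him => h z him hz
  have h₁ := hroot _ ((quadratic_eq_zero_iff ha hs _).2 (Or.inl rfl))
  have h₂ := hroot _ ((quadratic_eq_zero_iff ha hs _).2 (Or.inr rfl))
  intro hzero
  have hmid : 2 * w = (-b + s) / (2 * a) + (-b - s) / (2 * a) := by
    field_simp
    linear_combination 2 * hzero
  have := congrArg im hmid
  simp only [add_im, mul_im, re_ofNat, im_ofNat, zero_mul, add_zero] at this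
  linarith

theorem eval_rename_some_add_X_none_mul {σ : Type*} (p q : MvPolynomial σ ℂ)
    (y : Option σ → ℂ) :
    eval y (rename some p + X none * rename some q) =
      eval (y ∘ some) p + y none * eval (y ∘ some) q := by
  simp [eval_rename]

section Contraction

variable {σ : Type*} [Finite σ] {A B C D : MvPolynomial σ ℂ}

theorem eq_zero_or_isStable_mixed_coeff
    (h : ∀ x : σ → ℂ, (∀ i, 0 < (x i).im) → ∀ w u : ℂ, 0 < w.im → 0 < u.im →
      eval x A + w * eval x B + u * eval x C + w * u * eval x D ≠ 0) :
    D = 0 ∨ IsStable D := by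
  -- regard `(A + wB) + u (C + wD)` as a polynomial in `u` over `ℂ[x, w]`
  set Q : MvPolynomial (Option σ) ℂ := rename some C + X none * rename some D
  have hQ : Q = 0 ∨ IsStable Q := by
    refine eq_zero_or_isStable_coeff_of_add_mul (P := rename some A + X none * rename some B)
      fun y hy u hu hzero => h (y ∘ some) (fun i => hy _) (y none) u (hy none) hu ?_
    rw [eval_rename_some_add_X_none_mul, eval_rename_some_add_X_none_mul] at hzero
    linear_combination hzero
  rcases hQ with hQ | hQ
  · left
    refine MvPolynomial.funext fun x => ?_
    have h₀ := congrArg (eval fun o => o.elim 0 x) hQ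
    have h₁ := congrArg (eval fun o => o.elim 1 x) hQ
    simp only [Q, eval_rename_some_add_X_none_mul, map_zero, Function.comp_def, Option.elim_some,
      Option.elim_none] at h₀ h₁
    rw [map_zero]
    linear_combination h₁ - h₀
  · refine eq_zero_or_isStable_coeff_of_add_mul (P := C) fun x hx w hw => ?_
    simpa [Q, eval_rename_some_add_X_none_mul, Function.comp_def] using
      hQ (fun o => o.elim w x) (by rintro (_ | i); exacts [hw, hx i])

theorem eq_zero_or_isStable_contraction
    (h : ∀ x : σ → ℂ, (∀ i, 0 < (x i).im) → ∀ w u : ℂ, 0 < w.im → 0 < u.im →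
      eval x A + w * eval x B + u * eval x C + w * u * eval x D ≠ 0) :
    B + C = 0 ∨ IsStable (B + C) := by
  have hdiag : ∀ x : σ → ℂ, (∀ i, 0 < (x i).im) → ∀ w : ℂ, 0 < w.im →
      eval x D * (w * w) + eval x (B + C) * w + eval x A ≠ 0 := fun x hx w hw hzero =>
    h x hx w w hw hw (by rw [map_add] at hzero; linear_combination hzero)
  rcases eq_zero_or_isStable_mixed_coeff h with hD | hD
  · refine eq_zero_or_isStable_coeff_of_add_mul (P := A) fun x hx w hw hzero => hdiag x hx w hw ?_
    rw [hD, map_zero]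
    linear_combination hzero
  · refine eq_zero_or_isStable_const_of_add_mul (Q := (2 : ℂ) • D) fun x hx w hw => ?_
    convert add_mul_ne_zero_of_quadratic (hD x hx) (hdiag x hx) hw using 1
    simp only [map_add, smul_eval]
    ring

end Contraction

section Multiaffine

variable {σ : Type*}

noncomputable def sqfreeExponent (S : Finset σ) : σ →₀ ℕ := ∑ i ∈ S, Finsupp.single i 1

theorem sqfreeExponent_apply (S : Finset σ) (i : σ) :
    sqfreeExponent S i = if i ∈ S then 1 else 0 := by
  simp [sqfreeExponent, Finsupp.finsetSum_apply, Finsupp.single_apply]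

theorem sqfreeExponent_injective : (sqfreeExponent (σ := σ)).Injective := fun S U h => by
  ext i
  have := DFunLike.congr_fun h i
  rw [sqfreeExponent_apply, sqfreeExponent_apply] at this
  split_ifs at this <;> simp_all

theorem prod_X_eq_monomial_sqfreeExponent (S : Finset σ) :
    (∏ i ∈ S, X i : MvPolynomial σ ℂ) = monomial (sqfreeExponent S) 1 := by
  simp only [sqfreeExponent, monomial_sum_one, X]

theorem eq_sum_coeff_sqfreeExponent_smul [Fintype σ] {f : MvPolynomial σ ℂ}
    (hf : ∀ i, degreeOf i f ≤ 1) :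
    f = ∑ S : Finset σ, coeff (sqfreeExponent S) f • ∏ i ∈ S, X i := by
  have hsupp : ∀ m ∈ f.support, sqfreeExponent m.support = m := fun m hm => by
    ext i
    have := degreeOf_le_iff.1 (hf i) m hm
    simp only [sqfreeExponent_apply, Finsupp.mem_support_iff]
    split_ifs <;> omega
  calc f = ∑ m ∈ f.support, monomial m (coeff m f) := f.as_sum
    _ = ∑ m ∈ Finset.univ.image sqfreeExponent, monomial m (coeff m f) :=
      Finset.sum_subset (fun m hm => Finset.mem_image.2 ⟨_, Finset.mem_univ _, hsupp m hm⟩)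
        fun m _ hm => by rw [notMem_support_iff.1 hm, monomial_zero]
    _ = _ := by
      rw [Finset.sum_image sqfreeExponent_injective.injOn]
      simp_rw [prod_X_eq_monomial_sqfreeExponent, smul_monomial, smul_eq_mul, mul_one]

end Multiaffine

section Perturbation

variable {σ : Type*} [Fintype σ] {w : σ → ℂ}

theorem isStable_prod_X_add_C (hw : ∀ i, 0 < (w i).im) :
    IsStable (∏ i, (X i + C (w i)) : MvPolynomial σ ℂ) := fun x hx => by
  simp only [map_prod, map_add, eval_X, eval_C, Finset.prod_ne_zero_iff]
  intro i _ hzero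
  have := congrArg im hzero
  simp only [add_im, zero_im] at this
  linarith [hx i, hw i]

theorem norm_pow_le_mul_norm_add {z w : ℂ} (hz : 0 < z.im) (hw : 0 < w.im) {k : ℕ}
    (hk : k ≤ 1) : ‖z‖ ^ k ≤ (1 + (1 + ‖w‖) / w.im) * ‖z + w‖ := by
  have ht : 1 ≤ ‖z + w‖ / w.im := (one_le_div hw).2 <|
    (by rw [add_im]; linarith : w.im ≤ (z + w).im).trans (im_le_norm _)
  have hK : (1 + (1 + ‖w‖) / w.im) * ‖z + w‖ = ‖z + w‖ + (1 + ‖w‖) * (‖z + w‖ / w.im) := by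
    field_simp
  have hz' : ‖z‖ ≤ ‖z + w‖ + ‖w‖ := by simpa using norm_sub_le (z + w) w
  rw [hK]
  interval_cases k <;> nlinarith [norm_nonneg w, norm_nonneg (z + w)]

theorem exists_norm_eval_le_mul_norm_eval_prod_X_add_C (hw : ∀ i, 0 < (w i).im)
    {g : MvPolynomial σ ℂ} (hg : ∀ i, degreeOf i g ≤ 1) :
    ∃ M : ℝ, ∀ x : σ → ℂ, (∀ i, 0 < (x i).im) →
      ‖eval x g‖ ≤ M * ‖eval x (∏ i, (X i + C (w i)))‖ := by
  refine ⟨(∑ m ∈ g.support, ‖coeff m g‖) * ∏ i, (1 + (1 + ‖w i‖) / (w i).im),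
    fun x hx => ?_⟩
  simp only [map_prod, map_add, eval_X, eval_C, norm_prod]
  rw [eval_eq', Finset.sum_mul, Finset.sum_mul]
  refine (norm_sum_le _ _).trans (Finset.sum_le_sum fun m hm => ?_)
  rw [norm_mul, mul_assoc, ← Finset.prod_mul_distrib]
  refine mul_le_mul_of_nonneg_left ?_ (norm_nonneg _)
  simp only [norm_prod, norm_pow]
  exact Finset.prod_le_prod (fun _ _ => by positivity) fun i _ =>
    norm_pow_le_mul_norm_add (hx i) (hw i) (degreeOf_le_iff.1 (hg i) m hm)

theorem exists_isStable_prod_X_add_C_add_smul (hw : ∀ i, 0 < (w i).im)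
    {g : MvPolynomial σ ℂ} (hg : ∀ i, degreeOf i g ≤ 1) :
    ∃ ε : ℂ, ε ≠ 0 ∧ IsStable (∏ i, (X i + C (w i)) + ε • g) := by
  obtain ⟨M, hM⟩ := exists_norm_eval_le_mul_norm_eval_prod_X_add_C hw hg
  set ε : ℝ := 1 / (|M| + 1)
  have hε : 0 < ε := by positivity
  have hεM : ε * |M| < 1 := by
    rw [div_mul_eq_mul_div, one_mul, div_lt_one (by positivity)]
    linarith
  refine ⟨ε, by exact_mod_cast hε.ne', fun x hx hzero => ?_⟩
  rw [map_add, smul_eval, add_eq_zero_iff_eq_neg] at hzero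
  set F := eval x (∏ i, (X i + C (w i)))
  have hF : 0 < ‖F‖ := norm_pos_iff.2 (isStable_prod_X_add_C hw x hx)
  have : ‖F‖ ≤ ε * (|M| * ‖F‖) :=
    calc ‖F‖ = ε * ‖eval x g‖ := by
          rw [hzero, norm_neg, norm_mul, norm_real, Real.norm_of_nonneg hε.le]
      _ ≤ ε * (|M| * ‖F‖) := by
          gcongr
          exact (hM x hx).trans (by gcongr; exact le_abs_self M)
  nlinarith

end Perturbation

theorem finrank_le_one_of_forall_eq_zero_or_isStable {σ : Type*}
    {V : Submodule ℂ (MvPolynomial σ ℂ)} (hV : ∀ p ∈ V, p = 0 ∨ IsStable p) :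
    Module.finrank ℂ V ≤ 1 := by
  by_contra! hrank
  have : Nontrivial V := Module.nontrivial_of_finrank_pos (R := ℂ) (by omega)
  obtain ⟨p, hp⟩ := exists_ne (0 : V)
  obtain ⟨q, hpq⟩ := exists_linearIndependent_pair_of_one_lt_finrank hrank hp
  obtain ⟨x, hx, hpx⟩ := exists_forall_im_pos_eval_ne_zero (p := (p : MvPolynomial σ ℂ))
    (by simpa using hp)
  have hmem : eval x p • (q : MvPolynomial σ ℂ) - eval x q • (p : MvPolynomial σ ℂ) ∈ V :=
    V.sub_mem (V.smul_mem _ q.2) (V.smul_mem _ p.2)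
  rcases hV _ hmem with hzero | hstable
  · refine hpx (LinearIndependent.pair_iff.1 hpq (-eval x q) (eval x p) (Subtype.ext ?_)).2
    simpa [sub_eq_neg_add] using hzero
  · exact hstable x hx (by simp [mul_comm])

theorem prod_X_add_C_eq_sum {σ : Type*} [Fintype σ] [DecidableEq σ] (w : σ → ℂ) :
    (∏ i, (X i + C (w i)) : MvPolynomial σ ℂ) =
      ∑ S : Finset σ, (∏ i ∈ Sᶜ, w i) • ∏ i ∈ S, X i := by
  rw [Finset.prod_add, Finset.powerset_univ]
  refine Finset.sum_congr rfl fun S _ => ?_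
  rw [smul_eq_C_mul, ← Finset.compl_eq_univ_sdiff, ← map_prod, mul_comm]

section Operator

variable {n : ℕ} (T : MultiaffineSubmodule n →ₗ[ℂ] MultiaffineSubmodule n)

noncomputable def imageMonomial (S : Finset (Fin n)) : MvPolynomial (Fin n) ℂ :=
  T ⟨∏ i ∈ S, X i, prodX_mem_multiaffine S⟩

/-- `T (∏ i, (z i + w i))`, with `z i = X (inl i)` and `w i = X (inr i)`. -/
def PreservesStability : Prop :=
  ∀ f : MultiaffineSubmodule n, IsStable (f : MvPolynomial (Fin n) ℂ) →
    (T f : MvPolynomial (Fin n) ℂ) = 0 ∨ IsStable (T f : MvPolynomial (Fin n) ℂ)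

noncomputable def symbol : MvPolynomial (Fin n ⊕ Fin n) ℂ :=
  ∑ S, rename Sum.inl (imageMonomial T S) * ∏ i ∈ Sᶜ, X (Sum.inr i)

theorem sum_smul_prod_X_mem_multiaffine (c : Finset (Fin n) → ℂ) :
    ∑ S, c S • ∏ i ∈ S, (X i : MvPolynomial (Fin n) ℂ) ∈ MultiaffineSubmodule n :=
  Submodule.sum_mem _ fun S _ => Submodule.smul_mem _ _ (prodX_mem_multiaffine S)

theorem coe_map_sum_smul_prod_X (c : Finset (Fin n) → ℂ) :
    (T ⟨_, sum_smul_prod_X_mem_multiaffine c⟩ : MvPolynomial (Fin n) ℂ) =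
      ∑ S, c S • imageMonomial T S := by
  have : (⟨_, sum_smul_prod_X_mem_multiaffine c⟩ : MultiaffineSubmodule n) =
      ∑ S, c S • ⟨∏ i ∈ S, X i, prodX_mem_multiaffine S⟩ := by
    ext1
    simp
  rw [this, map_sum, Submodule.coe_sum]
  simp only [map_smul, Submodule.coe_smul, imageMonomial]

theorem coe_map_eq_sum_coeff_smul (f : MultiaffineSubmodule n) :
    (T f : MvPolynomial (Fin n) ℂ) =
      ∑ S, coeff (sqfreeExponent S) (f : MvPolynomial (Fin n) ℂ) • imageMonomial T S := by
  rw [← coe_map_sum_smul_prod_X]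
  congr 2
  exact Subtype.ext (eq_sum_coeff_sqfreeExponent_smul f.2)

theorem prod_X_add_C_mem_multiaffine (w : Fin n → ℂ) :
    ∏ i, (X i + C (w i)) ∈ MultiaffineSubmodule n := by
  rw [prod_X_add_C_eq_sum]
  exact sum_smul_prod_X_mem_multiaffine _

theorem eval_symbol (ζ : Fin n ⊕ Fin n → ℂ) :
    eval ζ (symbol T) = eval (ζ ∘ Sum.inl)
      (T ⟨_, prod_X_add_C_mem_multiaffine (ζ ∘ Sum.inr)⟩ : MvPolynomial (Fin n) ℂ) := by
  simp_rw [prod_X_add_C_eq_sum, coe_map_sum_smul_prod_X, symbol, map_sum, map_mul, eval_rename,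
    map_prod, eval_X, smul_eval, mul_comm]
  rfl

end Operator

section Forward

variable {n : ℕ} {T : MultiaffineSubmodule n →ₗ[ℂ] MultiaffineSubmodule n}

theorem map_eq_zero_or_isStable_of_map_prod_X_add_C_eq_zero
    (hT : PreservesStability T) {w : Fin n → ℂ} (hw : ∀ i, 0 < (w i).im)
    (hzero : T ⟨_, prod_X_add_C_mem_multiaffine w⟩ = 0) (g : MultiaffineSubmodule n) :
    (T g : MvPolynomial (Fin n) ℂ) = 0 ∨ IsStable (T g : MvPolynomial (Fin n) ℂ) := by
  obtain ⟨ε, hε, hstable⟩ := exists_isStable_prod_X_add_C_add_smul hw g.2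
  have := hT (⟨_, prod_X_add_C_mem_multiaffine w⟩ + ε • g) (by
    rwa [Submodule.coe_add, Submodule.coe_smul])
  rwa [map_add, hzero, zero_add, map_smul, Submodule.coe_smul, smul_eq_zero,
    isStable_smul_iff hε, or_iff_right hε] at this

theorem isStable_symbol_of_preservesStability
    (hrank : 2 ≤ Module.finrank ℂ (LinearMap.range T)) (hT : PreservesStability T) :
    IsStable (symbol T) := by
  intro ζ hζ
  rw [eval_symbol]
  rcases hT ⟨_, prod_X_add_C_mem_multiaffine (ζ ∘ Sum.inr)⟩
    (isStable_prod_X_add_C fun i => hζ (Sum.inr i)) with hzero | hstable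
  · have := finrank_le_one_of_forall_eq_zero_or_isStable
      (V := (LinearMap.range T).map (MultiaffineSubmodule n).subtype) <| by
        rintro _ ⟨_, ⟨g, rfl⟩, rfl⟩
        exact map_eq_zero_or_isStable_of_map_prod_X_add_C_eq_zero hT
          (fun i => hζ (Sum.inr i)) (Subtype.ext hzero) g
    rw [Submodule.finrank_map_subtype_eq] at this
    omega
  · exact hstable _ fun i => hζ (Sum.inl i)

end Forward

def AgreeOn {α : Type*} (K S U : Finset α) : Prop := ∀ j ∈ K, j ∈ S ↔ j ∈ U

section Backward

variable {n : ℕ} (T : MultiaffineSubmodule n →ₗ[ℂ] MultiaffineSubmodule n)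
  (f : MvPolynomial (Fin n) ℂ)

/-- `w_j ^ [j ∉ S] * v_j ^ [j ∈ U]`. Over `(Fin n ⊕ Fin n) ⊕ Fin n` the variables `z_j`, `w_j`,
`v_j` are `X (inl (inl j))`, `X (inl (inr j))` and `X (inr j)`. -/
noncomputable def wvFactor (S U : Finset (Fin n)) (j : Fin n) :
    MvPolynomial ((Fin n ⊕ Fin n) ⊕ Fin n) ℂ :=
  (if j ∈ Sᶜ then X (Sum.inl (Sum.inr j)) else 1) * (if j ∈ U then X (Sum.inr j) else 1)

noncomputable def contractionTerm (S U K : Finset (Fin n)) :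
    MvPolynomial ((Fin n ⊕ Fin n) ⊕ Fin n) ℂ :=
  C (coeff (sqfreeExponent U) f) * rename (Sum.inl ∘ Sum.inl) (imageMonomial T S) *
    ∏ j ∈ Kᶜ, wvFactor S U j

/-- With `P S U` the condition that `S` and `U` agree on `K`, this is the polynomial obtained
from `symbol T (z, w) * f (v)` by contracting the pairs of variables `(w_j, v_j)`, `j ∈ K`,
i.e. by keeping, in each of these pairs, exactly the terms of degree one. -/
noncomputable def partialContraction (P : Finset (Fin n) → Finset (Fin n) → Prop)
    (K : Finset (Fin n)) : MvPolynomial ((Fin n ⊕ Fin n) ⊕ Fin n) ℂ :=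
  ∑ S, ∑ U, if P S U then contractionTerm T f S U K else 0

variable {T f}

theorem contractionTerm_of_notMem {S U K : Finset (Fin n)} {i : Fin n} (hi : i ∉ K) :
    contractionTerm T f S U K = wvFactor S U i * contractionTerm T f S U (insert i K) := by
  have : Kᶜ = insert i (insert i K)ᶜ := by
    rw [Finset.compl_insert, Finset.insert_erase (Finset.mem_compl.2 hi)]
  rw [contractionTerm, contractionTerm, this, Finset.prod_insert (by simp)]
  ring

theorem eval_update_contractionTerm {S U K : Finset (Fin n)} {i : Fin n} (hi : i ∈ K)
    (y : (Fin n ⊕ Fin n) ⊕ Fin n → ℂ) (a b : ℂ) :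
    eval (Function.update (Function.update y (Sum.inl (Sum.inr i)) a) (Sum.inr i) b)
      (contractionTerm T f S U K) = eval y (contractionTerm T f S U K) := by
  have hne : ∀ j ∈ Kᶜ, j ≠ i := fun j hj hji => Finset.mem_compl.1 hj (hji ▸ hi)
  simp only [contractionTerm, map_mul, map_prod, eval_C, eval_rename]
  congr 1
  refine Finset.prod_congr rfl fun j hj => ?_
  simp only [wvFactor, map_mul, apply_ite (eval _), eval_X, map_one]
  simp [hne j hj]

theorem eval_update_partialContraction {P : Finset (Fin n) → Finset (Fin n) → Prop}
    {K : Finset (Fin n)} {i : Fin n} (hi : i ∈ K) (y : (Fin n ⊕ Fin n) ⊕ Fin n → ℂ) (a b : ℂ) :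
    eval (Function.update (Function.update y (Sum.inl (Sum.inr i)) a) (Sum.inr i) b)
      (partialContraction T f P K) = eval y (partialContraction T f P K) := by
  simp only [partialContraction, map_sum, apply_ite (eval _), map_zero,
    eval_update_contractionTerm hi]

theorem partialContraction_eq_add_of_notMem (P : Finset (Fin n) → Finset (Fin n) → Prop)
    {K : Finset (Fin n)} {i : Fin n} (hi : i ∉ K) :
    partialContraction T f P K =
      partialContraction T f (fun S U => P S U ∧ i ∈ S ∧ i ∉ U) (insert i K) +
      X (Sum.inl (Sum.inr i)) *
        partialContraction T f (fun S U => P S U ∧ i ∉ S ∧ i ∉ U) (insert i K) +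
      X (Sum.inr i) *
        partialContraction T f (fun S U => P S U ∧ i ∈ S ∧ i ∈ U) (insert i K) +
      X (Sum.inl (Sum.inr i)) * X (Sum.inr i) *
        partialContraction T f (fun S U => P S U ∧ i ∉ S ∧ i ∈ U) (insert i K) := by
  simp only [partialContraction, Finset.mul_sum, ← Finset.sum_add_distrib]
  refine Finset.sum_congr rfl fun S _ => Finset.sum_congr rfl fun U _ => ?_
  rw [contractionTerm_of_notMem hi]
  by_cases hP : P S U <;> by_cases hS : i ∈ S <;> by_cases hU : i ∈ U <;>
    simp [hP, hS, hU, wvFactor, mul_assoc]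

theorem partialContraction_agree_insert {K : Finset (Fin n)} {i : Fin n} (L : Finset (Fin n)) :
    partialContraction T f (AgreeOn (insert i K)) L =
      partialContraction T f (fun S U => AgreeOn K S U ∧ i ∉ S ∧ i ∉ U) L +
      partialContraction T f (fun S U => AgreeOn K S U ∧ i ∈ S ∧ i ∈ U) L := by
  simp only [partialContraction, ← Finset.sum_add_distrib]
  refine Finset.sum_congr rfl fun S _ => Finset.sum_congr rfl fun U _ => ?_
  by_cases hK : AgreeOn K S U <;> by_cases hS : i ∈ S <;> by_cases hU : i ∈ U <;>
    simp [AgreeOn, hS, hU] at hK ⊢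

theorem partialContraction_empty (hf : ∀ i, degreeOf i f ≤ 1) :
    partialContraction T f (AgreeOn ∅) ∅ =
      rename Sum.inl (symbol T) * rename Sum.inr f := by
  conv_rhs => rw [eq_sum_coeff_sqfreeExponent_smul hf]
  simp only [symbol, partialContraction, contractionTerm, wvFactor, map_sum, map_mul, map_prod,
    rename_rename, rename_X, Finset.sum_mul_sum, Finset.compl_empty,
    Finset.prod_mul_distrib, AgreeOn, Finset.notMem_empty, IsEmpty.forall_iff, implies_true,
    if_true, smul_eq_C_mul, rename_C, Fintype.prod_ite_mem]
  refine Finset.sum_congr rfl fun S _ => Finset.sum_congr rfl fun U _ => ?_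
  ring

theorem partialContraction_univ (hf : f ∈ MultiaffineSubmodule n) :
    partialContraction T f (AgreeOn Finset.univ) Finset.univ =
      rename (Sum.inl ∘ Sum.inl) (T ⟨f, hf⟩ : MvPolynomial (Fin n) ℂ) := by
  simp only [partialContraction, contractionTerm, Finset.compl_univ, Finset.prod_empty, mul_one,
    AgreeOn, Finset.mem_univ, forall_const, ← Finset.ext_iff, Finset.sum_ite_eq, if_true,
    coe_map_eq_sum_coeff_smul, map_sum, smul_eq_C_mul, map_mul, rename_C]

theorem eq_zero_or_isStable_partialContraction_insert {K : Finset (Fin n)} {i : Fin n}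
    (hi : i ∉ K)
    (h : partialContraction T f (AgreeOn K) K = 0 ∨
      IsStable (partialContraction T f (AgreeOn K) K)) :
    partialContraction T f (AgreeOn (insert i K)) (insert i K) = 0 ∨
      IsStable (partialContraction T f (AgreeOn (insert i K)) (insert i K)) := by
  set A := partialContraction T f (fun S U => AgreeOn K S U ∧ i ∈ S ∧ i ∉ U) (insert i K)
  set B := partialContraction T f (fun S U => AgreeOn K S U ∧ i ∉ S ∧ i ∉ U) (insert i K)
  set C := partialContraction T f (fun S U => AgreeOn K S U ∧ i ∈ S ∧ i ∈ U) (insert i K)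
  set D := partialContraction T f (fun S U => AgreeOn K S U ∧ i ∉ S ∧ i ∈ U) (insert i K)
  have heval : ∀ y a b, eval (Function.update (Function.update y (Sum.inl (Sum.inr i)) a)
      (Sum.inr i) b) (partialContraction T f (AgreeOn K) K) =
        eval y A + a * eval y B + b * eval y C + a * b * eval y D := by
    intro y a b
    rw [partialContraction_eq_add_of_notMem _ hi]
    simp only [map_add, map_mul, eval_X,
      eval_update_partialContraction (Finset.mem_insert_self i K), Function.update_self,
      Function.update_of_ne (show Sum.inl (Sum.inr i) ≠ (Sum.inr i : (Fin n ⊕ Fin n) ⊕ Fin n)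
        from Sum.inl_ne_inr), A, B, C, D]
  rw [partialContraction_agree_insert]
  rcases h with h | h
  · left
    refine MvPolynomial.funext fun y => ?_
    have h₀₀ := heval y 0 0
    have h₁₀ := heval y 1 0
    have h₀₁ := heval y 0 1
    rw [h, map_zero] at h₀₀ h₁₀ h₀₁
    rw [map_add, map_zero]
    linear_combination 2 * h₀₀ - h₁₀ - h₀₁
  · refine eq_zero_or_isStable_contraction (A := A) (D := D) fun y hy a b ha hb => ?_
    rw [← heval]
    refine h _ fun k => ?_
    simp only [Function.update_apply]
    split_ifs
    exacts [hb, ha, hy k]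

theorem eq_zero_or_isStable_partialContraction (hΦ : IsStable (symbol T))
    (hf : f ∈ MultiaffineSubmodule n) (hfs : IsStable f) (K : Finset (Fin n)) :
    partialContraction T f (AgreeOn K) K = 0 ∨
      IsStable (partialContraction T f (AgreeOn K) K) := by
  induction K using Finset.induction_on with
  | empty =>
    rw [partialContraction_empty hf]
    exact .inr ((hΦ.rename _).mul (hfs.rename _))
  | insert i K hi ih => exact eq_zero_or_isStable_partialContraction_insert hi ih

theorem preservesStability_of_isStable_symbol (hΦ : IsStable (symbol T)) :
    PreservesStability T := by
  intro f hf
  have hinj : (Sum.inl ∘ Sum.inl : Fin n → (Fin n ⊕ Fin n) ⊕ Fin n).Injective :=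
    Sum.inl_injective.comp Sum.inl_injective
  have := eq_zero_or_isStable_partialContraction hΦ f.2 hf Finset.univ
  rwa [partialContraction_univ f.2, map_eq_zero_iff _ (rename_injective _ hinj),
    isStable_rename_iff hinj] at this

end Backward

theorem borcea_branden_stability_criterion_general (n : ℕ)
    (T : MultiaffineSubmodule n →ₗ[ℂ] MultiaffineSubmodule n)
    (hT : 2 ≤ Module.finrank ℂ (LinearMap.range T)) :
    (∀ f : MultiaffineSubmodule n, IsStable (f : MvPolynomial (Fin n) ℂ) →
      ((T f : MvPolynomial (Fin n) ℂ) = 0 ∨ IsStable (T f : MvPolynomial (Fin n) ℂ))) ↔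
    IsStable (∑ S : Finset (Fin n),
      rename Sum.inl
          ((T ⟨∏ i ∈ S, X i, prodX_mem_multiaffine S⟩ : MultiaffineSubmodule n) :
            MvPolynomial (Fin n) ℂ) *
        ∏ i ∈ Sᶜ, (X (Sum.inr i) : MvPolynomial (Fin n ⊕ Fin n) ℂ)) :=
  ⟨isStable_symbol_of_preservesStability hT, preservesStability_of_isStable_symbol⟩

/-- Borcea–Brändén stability criterion: a linear operator `T : M_n → M_n` with at least
two-dimensional image preserves stability (sending stable polynomials to stable or zero
polynomials) iff `T(∏ᵢ (zᵢ + wᵢ)) = ∑_{S ⊆ {1,…,n}} T(z^S) w^{Sᶜ}` is stable in the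
`2n` variables (the `z`'s indexed by `Sum.inl`, the `w`'s by `Sum.inr`). -/
theorem borcea_branden_stability_criterion (n : ℕ) (hn : 1 ≤ n)
    (T : MultiaffineSubmodule n →ₗ[ℂ] MultiaffineSubmodule n)
    (hT : 2 ≤ Module.finrank ℂ (LinearMap.range T)) :
    (∀ f : MultiaffineSubmodule n, IsStable (f : MvPolynomial (Fin n) ℂ) →
      ((T f : MvPolynomial (Fin n) ℂ) = 0 ∨ IsStable (T f : MvPolynomial (Fin n) ℂ))) ↔
    IsStable (∑ S : Finset (Fin n),
      rename Sum.inl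
          ((T ⟨∏ i ∈ S, X i, prodX_mem_multiaffine S⟩ : MultiaffineSubmodule n) :
            MvPolynomial (Fin n) ℂ) *
        ∏ i ∈ Sᶜ, (X (Sum.inr i) : MvPolynomial (Fin n ⊕ Fin n) ℂ)) :=
  borcea_branden_stability_criterion_general n T hT
end

section
/- For every n ≥ 1, the polynomial ∑_{σ∈S_n} ∏_{j=1}^n (z_{σ(j)} + w_j) in the 2n variables z_1,…,z_n,w_1,…,w_n is stable; that is, it is nonvanishing whenever all of z_1,…,z_n,w_1,…,w_n lie in the open upper half-plane. -/
/-!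
Fix `w ∈ Hⁿ`. As a function of `z` the polynomial is symmetric and multiaffine,
`∑_S c_{|S|} ∏_{i ∈ S} z_i`, and its diagonal `z = (t, …, t)` is `n! ∏_j (t + w_j)`, which has no
zero in `H`. Freezing one variable `z_a = v ∈ H` turns the diagonal polynomial `q` (of degree
`≤ n`) into a multiple of its polar derivative `n q + (v - t) q'`, which still has no zero in `H`
(Laguerre): at `t ∈ H` we have `q'(t)/q(t) = ∑_r 1/(t - r)` over the roots `r` of `q`, all in the
closed lower half-plane, and inversion maps `{Im ≥ Im t}` into a closed disk through `0`; by
convexity `(1/n) ∑_r 1/(t - r)` stays in that disk, which forces `Im v ≤ 0` at a zero.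
Induction on the number of variables then gives the theorem (Grace–Walsh–Szegő).
-/

open MvPolynomial
open scoped Classical

open Finset Equiv Complex
open scoped Pointwise

theorem Convex.multiset_sum_mem_smul_of_card_le {𝕜 E : Type*} [Field 𝕜] [LinearOrder 𝕜]
    [IsStrictOrderedRing 𝕜] [AddCommGroup E] [Module 𝕜 E] {K : Set E} (hK : Convex 𝕜 K)
    (h₀ : (0 : E) ∈ K) {s : Multiset E} (hs : ∀ x ∈ s, x ∈ K) {n : ℕ}
    (hn : Multiset.card s ≤ n) : s.sum ∈ (n : 𝕜) • K := by
  induction s using Multiset.induction generalizing n with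
  | empty => exact Set.zero_mem_smul_set h₀
  | cons a s ih =>
    cases n with
    | zero => simp at hn
    | succ m =>
      rw [Multiset.sum_cons, Nat.cast_succ, add_comm (m : 𝕜),
        hK.add_smul zero_le_one m.cast_nonneg, one_smul]
      exact Set.add_mem_add (hs a (Multiset.mem_cons_self a s))
        (ih (fun x hx => hs x (Multiset.mem_cons_of_mem hx)) (by simpa using hn))

/-- For `0 < y`, the closed disk with center `-i/(2y)` and radius `1/(2y)`: the image of the
half-plane `{ξ | y ≤ ξ.im}` under `ξ ↦ ξ⁻¹`. -/
def halfPlaneInvDisk (y : ℝ) : Set ℂ := {u | y * ‖u‖ ^ 2 + u.im ≤ 0}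

theorem zero_mem_halfPlaneInvDisk (y : ℝ) : (0 : ℂ) ∈ halfPlaneInvDisk y := by
  simp [halfPlaneInvDisk]

theorem convex_halfPlaneInvDisk {y : ℝ} (hy : 0 ≤ y) : Convex ℝ (halfPlaneInvDisk y) := by
  have h := ((convexOn_univ_norm.pow (fun _ _ => norm_nonneg _) 2).smul hy).add
    (imLm.convexOn convex_univ)
  simpa [halfPlaneInvDisk] using h.convex_le 0

theorem inv_mem_halfPlaneInvDisk {y : ℝ} {ξ : ℂ} (h : y ≤ ξ.im) : ξ⁻¹ ∈ halfPlaneInvDisk y := by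
  simp only [halfPlaneInvDisk, Set.mem_ofPred_eq, Complex.sq_norm, map_inv₀, inv_im]
  rw [← div_eq_mul_inv, ← add_div]
  exact div_nonpos_of_nonpos_of_nonneg (by linarith) (normSq_nonneg ξ)

theorem le_im_inv_of_mem_halfPlaneInvDisk {y : ℝ} {u : ℂ} (hu : u ∈ halfPlaneInvDisk y)
    (h0 : u ≠ 0) : y ≤ (u⁻¹).im := by
  simp only [halfPlaneInvDisk, Set.mem_ofPred_eq, Complex.sq_norm] at hu
  rw [inv_im, le_div_iff₀ (normSq_pos.mpr h0)]
  linarith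

namespace Polynomial

section CommSemiring

variable {R : Type*} [CommSemiring R]

noncomputable def diagPoly (n : ℕ) (c : ℕ → R) : R[X] :=
  ∑ k ∈ range (n + 1), C (n.choose k * c k) * X ^ k

theorem coeff_diagPoly (n : ℕ) (c : ℕ → R) (k : ℕ) :
    (diagPoly n c).coeff k = n.choose k * c k := by
  simp only [diagPoly, finsetSum_coeff, coeff_C_mul_X_pow]
  rw [sum_ite_eq, ite_eq_left_iff, mem_range, not_lt]
  intro hk
  rw [Nat.choose_eq_zero_of_lt hk, Nat.cast_zero, zero_mul]

theorem natDegree_diagPoly_le (n : ℕ) (c : ℕ → R) : (diagPoly n c).natDegree ≤ n := by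
  refine natDegree_le_iff_coeff_eq_zero.mpr fun k hk => ?_
  rw [coeff_diagPoly, Nat.choose_eq_zero_of_lt hk, Nat.cast_zero, zero_mul]

theorem diagPoly_add_mul (n : ℕ) (c d : ℕ → R) (v : R) :
    diagPoly n (fun k => c k + v * d k) = diagPoly n c + C v * diagPoly n d := by
  ext k
  simp only [coeff_diagPoly, coeff_add, coeff_C_mul]
  ring

theorem diagPoly_succ (n : ℕ) (c : ℕ → R) :
    diagPoly (n + 1) c = diagPoly n c + X * diagPoly n (fun k => c (k + 1)) := by
  ext (_ | k)
  · simp [coeff_diagPoly]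
  · simp only [coeff_diagPoly, coeff_add, coeff_X_mul, Nat.choose_succ_succ', Nat.cast_add]
    ring

theorem derivative_diagPoly_succ (n : ℕ) (c : ℕ → R) :
    derivative (diagPoly (n + 1) c) = C ((n : R) + 1) * diagPoly n (fun k => c (k + 1)) := by
  ext k
  rw [coeff_derivative, coeff_diagPoly, coeff_C_mul, coeff_diagPoly]
  have h := congrArg (Nat.cast (R := R)) (Nat.add_one_mul_choose_eq n k)
  push_cast at h
  rw [← mul_assoc, h]
  ring

end CommSemiring

theorem diagPoly_polar {R : Type*} [CommRing R] (n : ℕ) (c : ℕ → R) (v : R) :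
    C ((n : R) + 1) * diagPoly (n + 1) c + (C v - X) * derivative (diagPoly (n + 1) c) =
      C ((n : R) + 1) * diagPoly n (fun k => c k + v * c (k + 1)) := by
  rw [derivative_diagPoly_succ, diagPoly_succ, diagPoly_add_mul (R := R)]
  ring

theorem eval_polar_ne_zero {n : ℕ} (hn : n ≠ 0) {q : ℂ[X]} (hdeg : q.natDegree ≤ n)
    (hq : ∀ t : ℂ, 0 < t.im → q.eval t ≠ 0) {v : ℂ} (hv : 0 < v.im) {t : ℂ} (ht : 0 < t.im) :
    (C (n : ℂ) * q + (C v - X) * derivative q).eval t ≠ 0 := by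
  have hqt := hq t ht
  have hq0 : q ≠ 0 := by rintro rfl; simp at hqt
  obtain ⟨u, hu, hsum⟩ :
      (q.roots.map fun r => 1 / (t - r)).sum ∈ (n : ℝ) • halfPlaneInvDisk t.im := by
    refine (convex_halfPlaneInvDisk ht.le).multiset_sum_mem_smul_of_card_le
      (zero_mem_halfPlaneInvDisk _) ?_ (by simpa using (card_roots' q).trans hdeg)
    simp only [Multiset.mem_map]
    rintro _ ⟨r, hr, rfl⟩
    have hr_im : r.im ≤ 0 := not_lt.mp fun h => hq r h ((mem_roots hq0).mp hr)
    rw [one_div]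
    exact inv_mem_halfPlaneInvDisk (by simp only [sub_im]; linarith)
  have hfactor : 1 + (v - t) * u ≠ 0 := by
    intro h
    have hu0 : u ≠ 0 := by rintro rfl; simp at h
    have hv_eq : v = t - u⁻¹ := by field_simp; linear_combination h
    have := le_im_inv_of_mem_halfPlaneInvDisk hu hu0
    rw [hv_eq, sub_im] at hv
    linarith
  rw [eval_add, eval_mul, eval_mul, (IsAlgClosed.splits q).eval_derivative_eq_eval_mul_sum hqt,
    ← hsum]
  simp only [eval_C, eval_sub, eval_X, Complex.real_smul, ofReal_natCast]
  have : (n : ℂ) * q.eval t * (1 + (v - t) * u) ≠ 0 := by simp [hn, hqt, hfactor]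
  convert this using 1
  ring

end Polynomial

section

variable {R : Type*} [CommSemiring R] {ι : Type*}

def symmMultiaffine (s : Finset ι) (c : ℕ → R) (z : ι → R) : R :=
  ∑ S ∈ s.powerset, c #S * ∏ i ∈ S, z i

variable [DecidableEq ι]

theorem symmMultiaffine_insert {a : ι} {s : Finset ι} (ha : a ∉ s) (c : ℕ → R) (z : ι → R) :
    symmMultiaffine (insert a s) c z = symmMultiaffine s (fun k => c k + z a * c (k + 1)) z := by
  simp only [symmMultiaffine, add_mul, sum_add_distrib, sum_powerset_insert ha]
  congr 1
  refine sum_congr rfl fun S hS => ?_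
  have haS : a ∉ S := fun h => ha (mem_powerset.mp hS h)
  rw [card_insert_of_notMem haS, prod_insert haS]
  ring

theorem symmMultiaffine_const (s : Finset ι) (c : ℕ → R) (t : R) :
    symmMultiaffine s c (fun _ => t) = (Polynomial.diagPoly #s c).eval t := by
  induction s using Finset.induction generalizing c with
  | empty => simp [symmMultiaffine, Polynomial.diagPoly]
  | insert a s ha ih =>
    rw [symmMultiaffine_insert ha, ih, card_insert_of_notMem ha, Polynomial.diagPoly_succ,
      Polynomial.diagPoly_add_mul]
    simp only [Polynomial.eval_add, Polynomial.eval_mul, Polynomial.eval_C, Polynomial.eval_X]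

theorem symmMultiaffine_ne_zero (s : Finset ι) (c : ℕ → ℂ)
    (hc : ∀ t : ℂ, 0 < t.im → (Polynomial.diagPoly #s c).eval t ≠ 0) {z : ι → ℂ}
    (hz : ∀ i ∈ s, 0 < (z i).im) : symmMultiaffine s c z ≠ 0 := by
  induction s using Finset.induction generalizing c with
  | empty => simpa [symmMultiaffine, Polynomial.diagPoly] using hc I (by simp)
  | insert a s ha ih =>
    rw [symmMultiaffine_insert ha]
    refine ih _ (fun t ht => ?_) fun i hi => hz i (mem_insert_of_mem hi)
    have hpolar := Polynomial.eval_polar_ne_zero (Nat.add_one_ne_zero #s)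
      (Polynomial.natDegree_diagPoly_le _ c) (by rwa [← card_insert_of_notMem ha])
      (hz a (mem_insert_self a s)) ht
    rw [Nat.cast_succ, Polynomial.diagPoly_polar, Polynomial.eval_mul, Polynomial.eval_C]
      at hpolar
    exact right_ne_zero_of_mul hpolar

theorem sum_perm_prod_eq_of_card_eq [Fintype ι] (w : ι → R) {T T' : Finset ι} (h : #T = #T') :
    ∑ σ : Perm ι, ∏ i ∈ T, w (σ i) = ∑ σ : Perm ι, ∏ i ∈ T', w (σ i) := by
  obtain ⟨π, rfl⟩ := Perm.exists_map_finset_eq T T' h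
  simp only [prod_map]
  exact (Equiv.sum_comp (Equiv.mulRight π) fun σ => ∏ i ∈ T, w (σ i)).symm

theorem exists_sum_perm_prod_add_eq_symmMultiaffine [Fintype ι] (w : ι → R) :
    ∃ c : ℕ → R, ∀ z : ι → R,
      ∑ σ : Perm ι, ∏ j, (z (σ j) + w j) = symmMultiaffine univ c z := by
  set a : Finset ι → R := fun S => ∑ σ : Perm ι, ∏ i ∈ Sᶜ, w (σ i)
  have ha : a.FactorsThrough card := fun S S' h =>
    sum_perm_prod_eq_of_card_eq w (by rw [card_compl, card_compl, h])
  refine ⟨Function.extend card a 0, fun z => ?_⟩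
  calc ∑ σ : Perm ι, ∏ j, (z (σ j) + w j)
      = ∑ σ : Perm ι, ∏ i, (z i + w (σ i)) := by
        rw [← Equiv.sum_comp (Equiv.inv (Perm ι))]
        refine sum_congr rfl fun σ _ => ?_
        rw [← Equiv.prod_comp σ]
        simp
    _ = ∑ S ∈ univ.powerset, a S * ∏ i ∈ S, z i := by
        simp only [prod_add, a, sum_mul, ← compl_eq_univ_sdiff]
        rw [sum_comm]
        simp only [mul_comm]
    _ = symmMultiaffine univ (Function.extend card a 0) z := by
        simp only [symmMultiaffine, ha.extend_apply]

end

theorem gws_polynomial_stable_general (n : ℕ) :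
    IsStable (∑ σ : Equiv.Perm (Fin n), ∏ j : Fin n,
      (X (Sum.inl (σ j)) + X (Sum.inr j) : MvPolynomial (Fin n ⊕ Fin n) ℂ)) := by
  intro x hx
  obtain ⟨c, hc⟩ := exists_sum_perm_prod_add_eq_symmMultiaffine fun j => x (Sum.inr j)
  have hdiag (t : ℂ) (ht : 0 < t.im) :
      (Polynomial.diagPoly #(univ : Finset (Fin n)) c).eval t ≠ 0 := by
    rw [← symmMultiaffine_const, ← hc, sum_const, nsmul_eq_mul]
    refine mul_ne_zero (by simp) (prod_ne_zero_iff.mpr fun j _ => ?_)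
    exact ne_of_apply_ne im (by simpa using (add_pos ht (hx (Sum.inr j))).ne')
  have hz := symmMultiaffine_ne_zero univ c hdiag (z := fun i => x (Sum.inl i)) fun i _ => hx _
  rw [← hc] at hz
  simpa using hz

/-- The Grace-Walsh-Szegő polynomial `∑_{σ ∈ S_n} ∏_j (z_{σ(j)} + w_j)` is stable. -/
theorem gws_polynomial_stable (n : ℕ) (hn : 1 ≤ n) :
    IsStable (∑ σ : Equiv.Perm (Fin n), ∏ j : Fin n,
      (X (Sum.inl (σ j)) + X (Sum.inr j) : MvPolynomial (Fin n ⊕ Fin n) ℂ)) :=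
  gws_polynomial_stable_general n
end

section
/- For every n ≥ 1, the full symmetrizer T_{S_n} = (1/n!) ∑_{σ∈S_n} σ maps every stable multiaffine polynomial in ℂ[z_1,…,z_n] to a stable polynomial. -/
/-!
Symmetrizing a multiaffine `f` yields a symmetric multiaffine `g` with the same diagonal
`g (w, …, w) = f (w, …, w)`. A symmetric multiaffine polynomial is a combination `∑ₖ cₖ eₖ`
of elementary symmetric polynomials, i.e. the polarization of its diagonal
`P(w) = ∑ₖ (n choose k) cₖ wᵏ`, and `P` is stable because `f` is. The Grace–Walsh–Szegő
theorem, that the polarization of a stable polynomial of degree at most `n` is stable, finishes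
the proof. It goes by induction on `n`: the polarization of `P` at `(t, s)` is, up to a factor,
the polarization of the polar derivative `n P + (t - X) P'` at `s`, and by Laguerre's theorem
this polar derivative is again stable when `Im t > 0`.
-/

open MvPolynomial
open scoped Classical

theorem Complex.norm_inv_add_I_div_le_iff {w : ℂ} {y : ℝ} (hy : 0 < y) (hw : w ≠ 0) :
    ‖w⁻¹ + I / (2 * y)‖ ≤ 1 / (2 * y) ↔ y ≤ w.im := by
  have hy0 : (y : ℂ) ≠ 0 := by exact_mod_cast hy.ne'
  have hnorm : ‖(2 * y : ℂ)‖ = 2 * y := by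
    exact_mod_cast (Complex.norm_real (2 * y)).trans (abs_of_pos (by positivity))
  rw [show w⁻¹ + I / (2 * y) = (2 * y + I * w) / (2 * y * w) by field_simp, norm_div, norm_mul,
    hnorm, div_le_div_iff₀ (by positivity) (by positivity), one_mul, mul_comm (2 * y),
    mul_le_mul_iff_left₀ (by positivity), ← sq_le_sq₀ (norm_nonneg _) (norm_nonneg _),
    Complex.sq_norm, Complex.sq_norm]
  simp only [Complex.normSq_apply, Complex.add_re, Complex.add_im, Complex.mul_re,
    Complex.mul_im, Complex.I_re, Complex.I_im, Complex.ofReal_re, Complex.ofReal_im]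
  norm_num
  constructor <;> intro h <;> nlinarith

theorem norm_multiset_sum_add_nsmul_le {E : Type*} [SeminormedAddCommGroup E] {s : Multiset E}
    {c : E} {ρ : ℝ} {N : ℕ} (hN : Multiset.card s ≤ N) (hc : ‖c‖ ≤ ρ)
    (hs : ∀ a ∈ s, ‖a + c‖ ≤ ρ) : ‖s.sum + N • c‖ ≤ N * ρ := by
  induction s using Multiset.induction generalizing N with
  | empty => simpa using norm_nsmul_le.trans (by gcongr)
  | cons a s ih =>
    obtain _ | N := N
    · simp at hN
    have hs' := ih (by simpa using hN) fun b hb => hs b (Multiset.mem_cons_of_mem hb)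
    calc ‖(a ::ₘ s).sum + (N + 1) • c‖ = ‖(a + c) + (s.sum + N • c)‖ := by
          rw [Multiset.sum_cons, succ_nsmul]; abel_nf
      _ ≤ ρ + N * ρ := (norm_add_le _ _).trans (add_le_add (hs a (Multiset.mem_cons_self a s)) hs')
      _ = (N + 1 : ℕ) * ρ := by push_cast; ring

namespace Multiset

variable {R : Type*} [CommSemiring R]

@[simp]
theorem esymm_zero (s : Multiset R) : s.esymm 0 = 1 := by
  simp [esymm]

theorem esymm_cons_succ (a : R) (s : Multiset R) (k : ℕ) :
    (a ::ₘ s).esymm (k + 1) = s.esymm (k + 1) + a * s.esymm k := by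
  simp [esymm, powersetCard_cons, ← sum_map_mul_left]

theorem esymm_eq_zero_of_card_lt {s : Multiset R} {k : ℕ} (h : card s < k) : s.esymm k = 0 := by
  simp [esymm, powersetCard_eq_empty _ h]

theorem esymm_replicate (n k : ℕ) (a : R) : (replicate n a).esymm k = n.choose k * a ^ k := by
  induction n generalizing k with
  | zero => cases k <;> simp [esymm, powersetCard_zero_right]
  | succ n ih =>
    cases k with
    | zero => simp
    | succ k => rw [replicate_succ, esymm_cons_succ, ih, ih, Nat.choose_succ_succ']; push_cast; ring

theorem sum_range_mul_esymm_cons (a : ℕ → R) (t : R) {s : Multiset R} {n : ℕ}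
    (hs : card s = n) :
    ∑ k ∈ Finset.range (n + 2), a k * (t ::ₘ s).esymm k
      = ∑ k ∈ Finset.range (n + 1), (a k + t * a (k + 1)) * s.esymm k := by
  have htop : s.esymm (n + 1) = 0 := esymm_eq_zero_of_card_lt (by omega)
  rw [Finset.sum_range_succ', esymm_zero]
  simp only [esymm_cons_succ, mul_add, add_mul, Finset.sum_add_distrib]
  rw [Finset.sum_range_succ (fun k => a (k + 1) * s.esymm (k + 1)),
    Finset.sum_range_succ' (fun k => a k * s.esymm k), htop, esymm_zero]
  simp only [mul_zero, add_zero, mul_one, mul_assoc, mul_left_comm _ t]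
  abel

end Multiset

theorem div_choose_succ_add_div_choose_succ_succ {K : Type*} [Field K] [CharZero K] {n k : ℕ}
    (hk : k ≤ n) (a b : K) :
    a / (n + 1).choose k + b / (n + 1).choose (k + 1)
      = ((n + 1 - k) * a + (k + 1) * b) / ((n + 1) * n.choose k) := by
  have h₁ : ((n + 1).choose k : K) * (n + 1 - k) = n.choose k * (n + 1) := by
    rw [← Nat.cast_add_one, ← Nat.cast_sub (by omega), ← Nat.cast_mul, ← Nat.cast_mul,
      Nat.choose_mul_succ_eq]
  have h₂ : ((n + 1).choose (k + 1) : K) * (k + 1) = (n + 1) * n.choose k := by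
    exact_mod_cast (Nat.add_one_mul_choose_eq n k).symm
  have hc₁ : ((n + 1).choose k : K) ≠ 0 := by exact_mod_cast (Nat.choose_pos (by omega)).ne'
  have hc₂ : ((n + 1).choose (k + 1) : K) ≠ 0 := by
    exact_mod_cast (Nat.choose_pos (by omega)).ne'
  have hc : (n.choose k : K) ≠ 0 := by exact_mod_cast (Nat.choose_pos hk).ne'
  have hn : (n + 1 : K) ≠ 0 := by exact_mod_cast n.succ_ne_zero
  rw [div_add_div _ _ hc₁ hc₂, div_eq_div_iff (mul_ne_zero hc₁ hc₂) (mul_ne_zero hn hc)]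
  linear_combination (-a * (n + 1).choose (k + 1)) * h₁ - (b * (n + 1).choose k) * h₂

namespace Polynomial

section PolarDerivative

variable {R : Type*} [CommRing R]

/-- The polar derivative of `Q`, regarded as a polynomial of degree `N`, with pole `t`. -/
noncomputable def polarDeriv (N : ℕ) (t : R) (Q : R[X]) : R[X] :=
  C (N : R) * Q + (C t - X) * derivative Q

@[simp]
theorem eval_polarDeriv (N : ℕ) (t : R) (Q : R[X]) (z : R) :
    (polarDeriv N t Q).eval z = N * Q.eval z + (t - z) * Q.derivative.eval z := by
  simp [polarDeriv]

theorem coeff_polarDeriv (N : ℕ) (t : R) (Q : R[X]) (k : ℕ) :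
    (polarDeriv N t Q).coeff k = (N - k) * Q.coeff k + t * (k + 1) * Q.coeff (k + 1) := by
  rcases k with _ | k
  · simp [polarDeriv, coeff_derivative]
  · simp only [polarDeriv, coeff_add, coeff_C_mul, sub_mul, coeff_sub, coeff_X_mul,
      coeff_derivative]
    push_cast
    ring

theorem natDegree_polarDeriv_le {n : ℕ} {Q : R[X]} (hQ : Q.natDegree ≤ n + 1) (t : R) :
    (polarDeriv (n + 1) t Q).natDegree ≤ n := by
  refine natDegree_le_iff_coeff_eq_zero.2 fun k hk => ?_
  have hk' : Q.coeff (k + 1) = 0 := coeff_eq_zero_of_natDegree_lt (by omega)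
  obtain rfl | hk := (show n + 1 ≤ k by exact_mod_cast hk).eq_or_lt
  · simp [coeff_polarDeriv, hk']
  · simp [coeff_polarDeriv, hk', coeff_eq_zero_of_natDegree_lt (hQ.trans_lt hk)]

end PolarDerivative

theorem eval_polarDeriv_ne_zero {N : ℕ} (hN : N ≠ 0) {Q : ℂ[X]} (hdeg : Q.natDegree ≤ N)
    (hQ : ∀ z : ℂ, 0 < z.im → Q.eval z ≠ 0) {t z : ℂ} (ht : 0 < t.im) (hz : 0 < z.im) :
    (polarDeriv N t Q).eval z ≠ 0 := by
  /- If it vanished, `N / (z - t) = Q'(z) / Q(z) = ∑ᵣ 1 / (z - r)` over the roots `r`, which lie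
  in `Im r ≤ 0`. Inversion maps `{Im w ≥ Im z}` into the closed disc `D` of centre `-i / (2 Im z)`
  through `0`, so the at most `N` summands lie in `D`, and `N / (z - t) ∈ N • D` forces
  `Im (z - t) ≥ Im z`. -/
  intro h
  set y := z.im
  have hQz := hQ z hz
  set S := (Q.roots.map fun r => 1 / (z - r)).sum
  have hS : (N : ℂ) = (z - t) * S := by
    rw [eval_polarDeriv, (IsAlgClosed.splits Q).eval_derivative_eq_eval_mul_sum hQz] at h
    exact mul_left_cancel₀ hQz (by linear_combination h)
  have hzt : z - t ≠ 0 := by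
    rintro hzt
    rw [hzt, zero_mul] at hS
    exact hN (by exact_mod_cast hS)
  have hroot : ∀ r ∈ Q.roots, y ≤ (z - r).im := fun r hr => by
    have : r.im ≤ 0 := not_lt.1 fun hr' => hQ r hr' (isRoot_of_mem_roots hr)
    simp only [Complex.sub_im]
    linarith
  have hc : ‖Complex.I / (2 * y)‖ ≤ 1 / (2 * y) := by
    simp [abs_of_pos hz]
  have hsum : ‖S + N • (Complex.I / (2 * y))‖ ≤ N * (1 / (2 * y)) := by
    refine norm_multiset_sum_add_nsmul_le
      ((Multiset.card_map _ _).trans_le ((card_roots' Q).trans hdeg)) hc ?_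
    simp only [Multiset.mem_map, forall_exists_index, and_imp]
    rintro _ r hr rfl
    have hr' := hroot r hr
    rw [one_div, Complex.norm_inv_add_I_div_le_iff hz fun h => by simp [h] at hr'; linarith]
    exact hr'
  have hS' : S + N • (Complex.I / (2 * y)) = N * ((z - t)⁻¹ + Complex.I / (2 * y)) := by
    rw [nsmul_eq_mul, hS]
    field_simp
  rw [hS', norm_mul, Complex.norm_natCast,
    mul_le_mul_iff_right₀ (by positivity), Complex.norm_inv_add_I_div_le_iff hz hzt,
    Complex.sub_im] at hsum
  linarith

section Polarization

variable {K : Type*} [Field K] [CharZero K]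

/-- The polarization of `Q`, regarded as a polynomial of degree `n`, evaluated at the points of
`s`: the symmetric multiaffine polynomial in `n` variables whose diagonal is `Q`. -/
noncomputable def polarization (n : ℕ) (Q : K[X]) (s : Multiset K) : K :=
  ∑ k ∈ Finset.range (n + 1), Q.coeff k / n.choose k * s.esymm k

theorem polarization_cons (Q : K[X]) (t : K) {s : Multiset K} {n : ℕ}
    (hs : Multiset.card s = n) :
    polarization (n + 1) Q (t ::ₘ s)
      = (n + 1 : K)⁻¹ * polarization n (polarDeriv (n + 1) t Q) s := by
  rw [polarization, polarization, Multiset.sum_range_mul_esymm_cons _ t hs, Finset.mul_sum]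
  refine Finset.sum_congr rfl fun k hk => ?_
  rw [← mul_div_assoc,
    div_choose_succ_add_div_choose_succ_succ (by simpa [Nat.lt_succ_iff] using hk),
    coeff_polarDeriv]
  push_cast
  field_simp

theorem polarization_sum_C_mul_X_pow (n : ℕ) (c : ℕ → K) (s : Multiset K) :
    polarization n (∑ k ∈ Finset.range (n + 1), C (n.choose k * c k) * X ^ k) s
      = ∑ k ∈ Finset.range (n + 1), c k * s.esymm k := by
  refine Finset.sum_congr rfl fun k hk => ?_
  have hc : (n.choose k : K) ≠ 0 := by
    exact_mod_cast (Nat.choose_pos (by simpa [Nat.lt_succ_iff] using hk)).ne'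
  simp only [finsetSum_coeff, coeff_C_mul_X_pow, Finset.sum_ite_eq, hk, if_true]
  field_simp

end Polarization

theorem polarization_ne_zero {n : ℕ} {Q : ℂ[X]} {s : Multiset ℂ} (hs : Multiset.card s = n)
    (hsH : ∀ r ∈ s, 0 < r.im) (hdeg : Q.natDegree ≤ n)
    (hQ : ∀ z : ℂ, 0 < z.im → Q.eval z ≠ 0) :
    polarization n Q s ≠ 0 := by
  induction n generalizing Q s with
  | zero =>
    rw [eq_C_of_natDegree_le_zero hdeg] at hQ
    simpa [polarization] using hQ Complex.I (by simp)
  | succ n ih =>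
    obtain ⟨t, s, rfl, hs'⟩ := Multiset.card_eq_succ_iff.1 hs
    have ht : 0 < t.im := hsH t (Multiset.mem_cons_self t s)
    rw [polarization_cons Q t hs']
    exact mul_ne_zero (inv_ne_zero (by exact_mod_cast n.succ_ne_zero))
      (ih hs' (fun r hr => hsH r (Multiset.mem_cons_of_mem hr)) (natDegree_polarDeriv_le hdeg t)
        fun z hz => eval_polarDeriv_ne_zero n.succ_ne_zero hdeg hQ ht hz)

end Polynomial

theorem Finset.exists_perm_map_eq {α : Type*} {s t : Finset α} (h : s.card = t.card) :
    ∃ e : Equiv.Perm α, s.map e.toEmbedding = t := by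
  obtain ⟨e, he⟩ :=
    (Set.powersetCard.isPretransitive (α := α) (n := t.card)).exists_smul_eq ⟨s, h⟩ ⟨t, rfl⟩
  exact ⟨e, by simpa [Finset.map_eq_image, Finset.smul_finset_def] using congrArg Subtype.val he⟩

section IndicatorExponent

variable {σ τ : Type*}

noncomputable def Finset.indicatorExponent (s : Finset σ) : σ →₀ ℕ :=
  ∑ i ∈ s, Finsupp.single i 1

theorem Finset.indicatorExponent_apply (s : Finset σ) (i : σ) :
    s.indicatorExponent i = if i ∈ s then 1 else 0 := by
  simp [indicatorExponent, Finsupp.finsetSum_apply, Finsupp.single_apply]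

@[simp]
theorem Finset.support_indicatorExponent (s : Finset σ) : s.indicatorExponent.support = s := by
  ext i
  simp [indicatorExponent_apply]

theorem Finsupp.indicatorExponent_support {m : σ →₀ ℕ} (h : ∀ i, m i ≤ 1) :
    m.support.indicatorExponent = m := by
  ext i
  have := h i
  rw [Finset.indicatorExponent_apply]
  split_ifs with hi <;> rw [mem_support_iff] at hi <;> omega

theorem Finset.mapDomain_indicatorExponent (e : σ ≃ τ) (s : Finset σ) :
    Finsupp.mapDomain e s.indicatorExponent = (s.map e.toEmbedding).indicatorExponent := by
  simp [indicatorExponent, Finsupp.mapDomain_finsetSum, Finsupp.mapDomain_single]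

end IndicatorExponent

section Multiaffine

variable {σ τ : Type*}

theorem IsMultiaffine.rename {f : MvPolynomial σ ℂ} (hf : IsMultiaffine f) (e : σ ≃ τ) :
    IsMultiaffine (rename e f) := fun i => by
  simpa using (degreeOf_rename_of_injective (p := f) e.injective (e.symm i)).trans_le (hf _)

theorem IsMultiaffine.smul {f : MvPolynomial σ ℂ} (hf : IsMultiaffine f) (c : ℂ) :
    IsMultiaffine (c • f) := fun i =>
  (smul_eq_C_mul f c ▸ degreeOf_C_mul_le f i c).trans (hf i)

theorem IsMultiaffine.sum {ι : Type*} {s : Finset ι} {f : ι → MvPolynomial σ ℂ}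
    (hf : ∀ j ∈ s, IsMultiaffine (f j)) : IsMultiaffine (∑ j ∈ s, f j) := fun i =>
  (degreeOf_sum_le i s f).trans (Finset.sup_le fun j hj => hf j hj i)

theorem IsMultiaffine.eq_sum_monomial [Fintype σ] {f : MvPolynomial σ ℂ}
    (hf : IsMultiaffine f) :
    f = ∑ s : Finset σ, monomial s.indicatorExponent (coeff s.indicatorExponent f) := by
  ext m
  simp only [coeff_sum, coeff_monomial]
  by_cases hm : ∀ i, m i ≤ 1
  · rw [Finset.sum_eq_single m.support, if_pos (Finsupp.indicatorExponent_support hm),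
      Finsupp.indicatorExponent_support hm]
    · intro s _ hs
      rw [if_neg]
      rintro rfl
      exact hs (Finset.support_indicatorExponent s).symm
    · simp
  · obtain ⟨i, hi⟩ := not_forall.1 hm
    have hf0 : coeff m f = 0 := notMem_support_iff.1 fun hmf =>
      hi (degreeOf_le_iff.1 (hf i) m hmf)
    refine hf0.trans (Finset.sum_eq_zero fun s _ => if_neg ?_).symm
    rintro rfl
    rw [Finset.indicatorExponent_apply] at hi
    split_ifs at hi <;> omega

end Multiaffine

namespace MvPolynomial

variable {σ : Type*}

theorem isSymmetric_sum_rename {R : Type*} [CommSemiring R] [Fintype σ] [DecidableEq σ]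
    (f : MvPolynomial σ R) : (∑ e : Equiv.Perm σ, rename e f).IsSymmetric := fun τ => by
  rw [map_sum]
  exact Fintype.sum_equiv (Equiv.mulLeft τ) _ _ fun e => by
    simp [rename_rename, Equiv.Perm.coe_mul]

theorem IsSymmetric.coeff_indicatorExponent_eq {R : Type*} [CommSemiring R]
    {g : MvPolynomial σ R} (hg : g.IsSymmetric) {s t : Finset σ} (h : s.card = t.card) :
    coeff s.indicatorExponent g = coeff t.indicatorExponent g := by
  obtain ⟨e, rfl⟩ := Finset.exists_perm_map_eq h
  rw [← Finset.mapDomain_indicatorExponent, ← coeff_rename_mapDomain e e.injective, hg]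

theorem IsSymmetric.exists_eq_sum_esymm [Fintype σ] {g : MvPolynomial σ ℂ} (hg : g.IsSymmetric)
    (ha : IsMultiaffine g) :
    ∃ c : ℕ → ℂ,
      g = ∑ k ∈ Finset.range (Fintype.card σ + 1), MvPolynomial.C (c k) * esymm σ ℂ k := by
  have hc (k : ℕ) :
      ∃ c : ℂ, ∀ s : Finset σ, s.card = k → coeff s.indicatorExponent g = c := by
    by_cases hk : ∃ s : Finset σ, s.card = k
    · obtain ⟨s, hs⟩ := hk
      exact ⟨_, fun t ht => hg.coeff_indicatorExponent_eq (ht.trans hs.symm)⟩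
    · exact ⟨0, fun s hs => (hk ⟨s, hs⟩).elim⟩
  choose c hc using hc
  refine ⟨c, ?_⟩
  calc g = ∑ s : Finset σ, monomial s.indicatorExponent (coeff s.indicatorExponent g) :=
        ha.eq_sum_monomial
    _ = ∑ s : Finset σ, monomial s.indicatorExponent (c s.card) :=
        Finset.sum_congr rfl fun s _ => by rw [hc _ s rfl]
    _ = ∑ k ∈ Finset.range (Fintype.card σ + 1),
          ∑ s ∈ Finset.powersetCard k Finset.univ, monomial s.indicatorExponent (c k) := by
        rw [← Finset.sum_fiberwise_of_maps_to (g := Finset.card) fun s _ =>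
          Finset.mem_range_succ_iff.2 s.card_le_univ]
        refine Finset.sum_congr rfl fun k _ => ?_
        rw [Finset.powersetCard_eq_filter, Finset.powerset_univ]
        exact Finset.sum_congr rfl fun s hs => by rw [(Finset.mem_filter.1 hs).2]
    _ = _ := by
        simp [esymm_eq_sum_monomial, Finset.mul_sum, C_mul_monomial, Finset.indicatorExponent]

end MvPolynomial

open scoped Polynomial in
theorem isStable_of_isSymmetric_of_isMultiaffine {σ : Type*} [Fintype σ] {g : MvPolynomial σ ℂ}
    (hg : g.IsSymmetric) (ha : IsMultiaffine g)
    (hdiag : ∀ w : ℂ, 0 < w.im → eval (fun _ => w) g ≠ 0) : IsStable g := by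
  obtain ⟨c, hc⟩ := hg.exists_eq_sum_esymm ha
  set N := Fintype.card σ
  set P : ℂ[X] := aeval (fun _ => Polynomial.X) g
  have hP :
      P = ∑ k ∈ Finset.range (N + 1), Polynomial.C (N.choose k * c k) * Polynomial.X ^ k := by
    simp only [P, hc, map_sum, map_mul, aeval_C, aeval_esymm_eq_multiset_esymm,
      Multiset.map_const', Finset.card_val, Finset.card_univ, Multiset.esymm_replicate]
    refine Finset.sum_congr rfl fun k _ => ?_
    simp only [Polynomial.algebraMap_eq, map_natCast]
    ring
  have hPeval (w : ℂ) : P.eval w = eval (fun _ => w) g := by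
    rw [← Polynomial.coe_aeval_eq_eval, ← AlgHom.comp_apply, comp_aeval]
    simp only [Polynomial.aeval_X, aeval_eq_eval]
  have hPdeg : P.natDegree ≤ N := by
    rw [hP]
    exact Polynomial.natDegree_sum_le_of_forall_le _ _ fun k hk =>
      (Polynomial.natDegree_C_mul_X_pow_le _ _).trans (by simpa [Nat.lt_succ_iff] using hk)
  intro x hx
  have heval : eval x g = Polynomial.polarization N P (Finset.univ.val.map x) := by
    rw [← aeval_eq_eval, hP, Polynomial.polarization_sum_C_mul_X_pow, hc]
    simp only [map_sum, map_mul, aeval_C, aeval_esymm_eq_multiset_esymm,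
      Algebra.algebraMap_self_apply]
  rw [heval]
  exact Polynomial.polarization_ne_zero (by simp [N]) (by simpa using fun i => hx i) hPdeg
    fun w hw => hPeval w ▸ hdiag w hw

theorem full_symmetrizer_preserves_stability_general (n : ℕ) :
    ∀ f : MvPolynomial (Fin n) ℂ, IsMultiaffine f → IsStable f →
      IsStable ((n.factorial : ℂ)⁻¹ • ∑ σ : Equiv.Perm (Fin n), rename ⇑σ f) := by
  intro f hf hstab
  refine isStable_of_isSymmetric_of_isMultiaffine ((isSymmetric_sum_rename f).smul _)
    ((IsMultiaffine.sum fun σ _ => hf.rename σ).smul _) fun w hw => ?_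
  have hfact : (n.factorial : ℂ) ≠ 0 := by exact_mod_cast n.factorial_ne_zero
  have hconst (σ : Equiv.Perm (Fin n)) :
      eval (fun _ => w) (rename σ f) = eval (fun _ => w) f := by
    rw [eval_rename]; rfl
  simp only [smul_eval, map_sum, hconst, Finset.sum_const, Finset.card_univ, Fintype.card_perm,
    Fintype.card_fin, nsmul_eq_mul, inv_mul_cancel_left₀ hfact]
  exact hstab _ fun _ => hw

/-- The full symmetrizer `T_{S_n} = (1/n!) ∑_{σ ∈ S_n} σ` maps every stable
multiaffine polynomial to a stable polynomial. -/
theorem full_symmetrizer_preserves_stability (n : ℕ) (hn : 1 ≤ n) :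
    ∀ f : MvPolynomial (Fin n) ℂ, IsMultiaffine f → IsStable f →
      IsStable ((n.factorial : ℂ)⁻¹ • ∑ σ : Equiv.Perm (Fin n), rename ⇑σ f) :=
  full_symmetrizer_preserves_stability_general n
end

section
/- Let f ∈ ℂ[z_1,…,z_n] be stable and let ζ ∈ ℂ with Im ζ ≥ 0. Then the polynomial g ∈ ℂ[z_1,…,z_{n−1}] obtained from f by substituting z_n = ζ is either stable or identically zero. -/
open MvPolynomial
open scoped Classical

/-!
If `Im ζ > 0` the substituted polynomial is stable outright; in general it is the limit of the
stable polynomials `g_ε = f(·, ζ + iε)` as `ε → 0⁺`, and the claim is Hurwitz's theorem. We reduce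
it to one variable: if `g(x) = 0` with `x ∈ Hⁿ` and `g(y) ≠ 0`, the complex line
`w ↦ x + w (y - x)` stays in `Hⁿ` for small `|w|`, and the restriction of `g` to it is a nonzero
polynomial, so it has no zero on some small circle `|w| = s`. By the minimum modulus principle
each `g_ε` takes a value on that circle of modulus at most `|g_ε(x)|`; letting `ε → 0` along a
compact family gives a zero of `g` on the circle, a contradiction.
-/

namespace MvPolynomial

variable {R σ : Type*} [CommSemiring R]

noncomputable def restrictToLine (p : MvPolynomial σ R) (a b : σ → R) : Polynomial R :=
  aeval (fun i => Polynomial.C (a i) + Polynomial.C (b i) * Polynomial.X) p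

theorem eval_restrictToLine (p : MvPolynomial σ R) (a b : σ → R) (w : R) :
    (p.restrictToLine a b).eval w = eval (a + w • b) p := by
  rw [restrictToLine, ← Polynomial.coe_aeval_eq_eval, comp_aeval_apply, ← aeval_eq_eval]
  congr 2
  funext i
  simp only [Polynomial.coe_aeval_eq_eval, Polynomial.eval_add, Polynomial.eval_mul,
    Polynomial.eval_C, Polynomial.eval_X, Pi.add_apply, Pi.smul_apply, smul_eq_mul, mul_comm]

theorem eval_aeval_snoc {n : ℕ} (f : MvPolynomial (Fin (n + 1)) R) (v : Fin n → R) (c : R) :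
    eval v (aeval (Fin.snoc X (C c) : Fin (n + 1) → MvPolynomial (Fin n) R) f)
      = eval (Fin.snoc v c) f := by
  rw [← aeval_eq_eval, comp_aeval_apply, ← aeval_eq_eval]
  congr 2
  funext i
  induction i using Fin.lastCases <;> simp

end MvPolynomial

theorem IsStable.eval_snoc_ne_zero {n : ℕ} {f : MvPolynomial (Fin (n + 1)) ℂ} (hf : IsStable f)
    {v : Fin n → ℂ} (hv : ∀ j, 0 < (v j).im) {c : ℂ} (hc : 0 < c.im) :
    eval (Fin.snoc v c) f ≠ 0 :=
  hf _ fun i => i.lastCases (by simpa) (by simpa using hv)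

theorem exists_pos_forall_norm_le_im_add_mul_pos {ι : Type*} [Finite ι] {x : ι → ℂ}
    (hx : ∀ i, 0 < (x i).im) (u : ι → ℂ) :
    ∃ r > 0, ∀ w : ℂ, ‖w‖ ≤ r → ∀ i, 0 < (x i + w * u i).im := by
  have hopen : IsOpen {w : ℂ | ∀ i, 0 < (x i + w * u i).im} := by
    simp only [Set.ofPred_forall]
    exact isOpen_iInter_of_finite fun i => isOpen_lt continuous_const (by fun_prop)
  obtain ⟨r, hr, hsub⟩ := Metric.nhds_basis_closedBall.mem_iff.1
    (hopen.mem_nhds (x := 0) (by simpa using hx))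
  exact ⟨r, hr, fun w hw => hsub (mem_closedBall_zero_iff.2 hw)⟩

theorem Polynomial.exists_pos_lt_forall_norm_eq_eval_ne_zero {p : Polynomial ℂ}
    (hp : p ≠ 0) {r : ℝ} (hr : 0 < r) : ∃ s ∈ Set.Ioo 0 r, ∀ w : ℂ, ‖w‖ = s → p.eval w ≠ 0 := by
  obtain ⟨s, hs, hsroots⟩ :=
    ((Set.Ioo_infinite hr).sdiff (p.roots.toFinset.image (‖·‖)).finite_toSet).nonempty
  refine ⟨s, hs, fun w hw hw0 => hsroots ?_⟩
  rw [← hw]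
  exact Finset.mem_image_of_mem _ (Multiset.mem_toFinset.2 ((mem_roots hp).2 hw0))

theorem Complex.exists_mem_sphere_norm_le_of_ne_zero {g : ℂ → ℂ} {c : ℂ} {r : ℝ}
    (hr : 0 < r) (hg : DiffContOnCl ℂ g (Metric.ball c r))
    (hne : ∀ w ∈ Metric.closedBall c r, g w ≠ 0) :
    ∃ w ∈ Metric.sphere c r, ‖g w‖ ≤ ‖g c‖ := by
  have hinv : DiffContOnCl ℂ (fun w => (g w)⁻¹) (Metric.ball c r) :=
    hg.inv fun w hw => hne w (by rwa [closure_ball c hr.ne'] at hw)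
  obtain ⟨w, hw, hmax⟩ := exists_mem_frontier_isMaxOn_norm Metric.isBounded_ball
    (Metric.nonempty_ball.2 hr) hinv
  rw [frontier_ball c hr.ne'] at hw
  have hc : ‖(g c)⁻¹‖ ≤ ‖(g w)⁻¹‖ := hmax (subset_closure (Metric.mem_ball_self hr))
  rw [norm_inv, norm_inv] at hc
  exact ⟨w, hw, (inv_le_inv₀ (norm_pos_iff.2 (hne c (Metric.mem_closedBall_self hr.le)))
    (norm_pos_iff.2 (hne w (Metric.sphere_subset_closedBall hw)))).1 hc⟩

/-- A one-parameter form of Hurwitz's theorem. -/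
theorem Complex.exists_mem_sphere_eq_zero_of_forall_pos_ne_zero {F : ℝ × ℂ → ℂ}
    (hF : Continuous F) {c : ℂ} {r : ℝ} (hr : 0 < r)
    (hd : ∀ ε > 0, DiffContOnCl ℂ (fun w => F (ε, w)) (Metric.ball c r))
    (hne : ∀ ε > 0, ∀ w ∈ Metric.closedBall c r, F (ε, w) ≠ 0) (h0 : F (0, c) = 0) :
    ∃ w ∈ Metric.sphere c r, F (0, w) = 0 := by
  set S : Set (ℝ × ℂ) :=
    (Set.Icc 0 1 ×ˢ Metric.sphere c r) ∩ {p | ‖F p‖ ≤ ‖F (p.1, c)‖}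
  have hS : IsCompact S :=
    (isCompact_Icc.prod (isCompact_sphere c r)).inter_right
      (isClosed_le hF.norm (hF.comp (continuous_fst.prodMk continuous_const)).norm)
  have hIoc : Set.Ioc 0 1 ⊆ Prod.fst '' S := by
    rintro ε ⟨hε, hε1⟩
    obtain ⟨w, hw, hle⟩ := exists_mem_sphere_norm_le_of_ne_zero hr (hd ε hε) (hne ε hε)
    exact ⟨(ε, w), ⟨⟨⟨hε.le, hε1⟩, hw⟩, hle⟩, rfl⟩
  have h0S : (0 : ℝ) ∈ Prod.fst '' S := by
    refine (hS.image continuous_fst).isClosed.closure_subset (closure_mono hIoc ?_)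
    rw [closure_Ioc zero_ne_one]
    exact Set.left_mem_Icc.2 zero_le_one
  obtain ⟨⟨_, w⟩, ⟨⟨-, hw⟩, hle⟩, rfl⟩ := h0S
  exact ⟨w, hw, norm_le_zero_iff.1 (by simpa [h0] using hle)⟩

/-- Fixing the last variable of a stable polynomial to a value in the closed upper
half-plane yields a polynomial that is stable or identically zero. -/
theorem stable_fix_last_variable (n : ℕ) (f : MvPolynomial (Fin (n + 1)) ℂ)
    (hf : IsStable f) (ζ : ℂ) (hζ : 0 ≤ ζ.im) :
    aeval (Fin.snoc X (C ζ) : Fin (n + 1) → MvPolynomial (Fin n) ℂ) f = 0 ∨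
      IsStable (aeval (Fin.snoc X (C ζ) : Fin (n + 1) → MvPolynomial (Fin n) ℂ) f) := by
  set g := aeval (Fin.snoc X (C ζ) : Fin (n + 1) → MvPolynomial (Fin n) ℂ) f
  refine or_iff_not_imp_left.2 fun hg x hx hgx => ?_
  obtain ⟨y, hy⟩ : ∃ y, eval y g ≠ 0 := by
    by_contra! h
    exact hg (MvPolynomial.funext fun y => by simp [h y])
  obtain ⟨r, hr, hrH⟩ := exists_pos_forall_norm_le_im_add_mul_pos hx (y - x)
  have hq : g.restrictToLine x (y - x) ≠ 0 := fun h =>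
    hy (by simpa [eval_restrictToLine] using congrArg (·.eval 1) h)
  obtain ⟨s, ⟨hs, hsr⟩, hqs⟩ := Polynomial.exists_pos_lt_forall_norm_eq_eval_ne_zero hq hr
  let F : ℝ × ℂ → ℂ := fun p =>
    eval (Fin.snoc (x + p.2 • (y - x)) (ζ + p.1 * Complex.I)) f
  have hF : ∀ ε w, F (ε, w) = ((aeval (Fin.snoc X (C (ζ + ε * Complex.I)) :
      Fin (n + 1) → MvPolynomial (Fin n) ℂ) f).restrictToLine x (y - x)).eval w := by
    intro ε w
    simp only [F, eval_restrictToLine, eval_aeval_snoc]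
  obtain ⟨w, hw, hFw⟩ := Complex.exists_mem_sphere_eq_zero_of_forall_pos_ne_zero (F := F)
    ((continuous_eval f).comp (by fun_prop)) hs
    (fun ε _ => by simp_rw [hF]; exact (Polynomial.differentiable _).diffContOnCl)
    (fun ε hε w hw => hf.eval_snoc_ne_zero
      (fun j => hrH w (by simpa using (mem_closedBall_zero_iff.1 hw).trans hsr.le) j)
      (by simpa using add_pos_of_nonneg_of_pos hζ hε))
    (by simp only [F, zero_smul, add_zero, Complex.ofReal_zero, zero_mul]
        rwa [← eval_aeval_snoc])
  refine hqs w (by simpa using hw) ?_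
  rw [eval_restrictToLine, eval_aeval_snoc]
  simpa [F] using hFw
end

section
/- Let n ≥ 1 and let G ≤ S_n be a permutation group. Suppose that for every multiaffine G-invariant polynomial f ∈ ℂ[z_1,…,z_n] and every ζ_1,…,ζ_n in the open upper half-plane H there exists ζ ∈ H such that f(ζ_1,…,ζ_n) = f(ζ,…,ζ). Then G acts transitively on {1,…,n}. -/
/-!
If `j` lies outside the orbit `O` of `i`, the weight `c = |α| · 𝟙_O - |O|` is a nonzero
`G`-invariant real vector with `∑ c = 0`. The linear form `ℓ = ∑ c_k z_k` is then multiaffine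
and `G`-invariant and vanishes on the diagonal, yet at `ζ_k = c_k + i ∈ H` it takes the value
`∑ c_k² + i ∑ c_k = ∑ c_k² ≠ 0`, so the coincidence property fails.
-/

open MvPolynomial
open scoped Classical

variable {α : Type*}

def HasCoincidenceProperty (G : Subgroup (Equiv.Perm α)) : Prop :=
  ∀ f : MvPolynomial α ℂ, IsMultiaffine f → (∀ σ ∈ G, rename ⇑σ f = f) →
    ∀ ζ : α → ℂ, (∀ i, 0 < (ζ i).im) →
      ∃ z : ℂ, 0 < z.im ∧ eval ζ f = eval (fun _ => z) f

variable [Fintype α]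

noncomputable def linearForm (c : α → ℂ) : MvPolynomial α ℂ :=
  ∑ k, C (c k) * X k

theorem eval_linearForm (c x : α → ℂ) : eval x (linearForm c) = ∑ k, c k * x k := by
  simp [linearForm]

theorem isMultiaffine_linearForm (c : α → ℂ) : IsMultiaffine (linearForm c) := by
  intro i
  refine (degreeOf_le_totalDegree _ i).trans <|
    (totalDegree_finsetSum _ _).trans <| Finset.sup_le fun k _ => ?_
  exact (totalDegree_mul _ _).trans (by simp [totalDegree_X])

theorem rename_linearForm_of_invariant {σ : Equiv.Perm α} {c : α → ℂ}
    (hc : ∀ k, c (σ k) = c k) : rename ⇑σ (linearForm c) = linearForm c := by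
  simp only [linearForm, map_sum, map_mul, rename_C, rename_X]
  conv_lhs => enter [2, k]; rw [← hc k]
  exact Equiv.sum_comp σ fun k => C (c k) * X k

theorem HasCoincidenceProperty.eq_zero_of_invariant_of_sum_eq_zero
    {G : Subgroup (Equiv.Perm α)} (hG : HasCoincidenceProperty G) {c : α → ℝ}
    (hc : ∀ σ ∈ G, ∀ k, c (σ k) = c k) (hsum : ∑ k, c k = 0) : c = 0 := by
  have hsumC : ∑ k, (c k : ℂ) = 0 := by exact_mod_cast hsum
  obtain ⟨z, -, hz⟩ := hG (linearForm fun k => c k) (isMultiaffine_linearForm _)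
    (fun σ hσ => rename_linearForm_of_invariant fun k => by simp [hc σ hσ k])
    (fun k => c k + Complex.I) (fun k => by simp)
  have hζ : eval (fun k => c k + Complex.I) (linearForm fun k => c k)
      = ((∑ k, c k ^ 2 : ℝ) : ℂ) := by
    simp [eval_linearForm, mul_add, Finset.sum_add_distrib, ← Finset.sum_mul, hsumC, sq]
  have hdiag : eval (fun _ => z) (linearForm fun k => c k) = 0 := by
    rw [eval_linearForm, ← Finset.sum_mul, hsumC, zero_mul]
  have hsq : ∑ k, c k ^ 2 = 0 := by exact_mod_cast hζ.symm.trans (hz.trans hdiag)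
  funext k
  exact pow_eq_zero_iff two_ne_zero |>.mp <|
    (Finset.sum_eq_zero_iff_of_nonneg fun k _ => sq_nonneg (c k)).mp hsq k (Finset.mem_univ k)

theorem exists_invariant_sum_eq_zero_of_notMem_orbit (G : Subgroup (Equiv.Perm α)) {i j : α}
    (hj : j ∉ MulAction.orbit G i) :
    ∃ c : α → ℝ, (∀ σ ∈ G, ∀ k, c (σ k) = c k) ∧ ∑ k, c k = 0 ∧ c j ≠ 0 := by
  set O := Finset.univ.filter (· ∈ MulAction.orbit G i)
  refine ⟨fun k => Fintype.card α * (if k ∈ MulAction.orbit G i then 1 else 0) - O.card,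
    fun σ hσ k => ?_, ?_, ?_⟩
  · have : σ k ∈ MulAction.orbit G i ↔ k ∈ MulAction.orbit G i := by
      change (⟨σ, hσ⟩ : G) • k ∈ _ ↔ _
      rw [MulAction.mem_orbit_symm, MulAction.orbit_smul]
      exact MulAction.mem_orbit_symm
    simp only [this]
  · rw [Finset.sum_sub_distrib, ← Finset.mul_sum, Finset.sum_boole]
    simp [O]
  · have : 0 < O.card := Finset.card_pos.mpr ⟨i, by simp [O, MulAction.mem_orbit_self]⟩
    simp only [hj, if_false, mul_zero, zero_sub, ne_eq, neg_eq_zero, Nat.cast_eq_zero]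
    omega

theorem coincidence_property_implies_transitive_general
    (n : ℕ) (G : Subgroup (Equiv.Perm (Fin n)))
    (hG : ∀ f : MvPolynomial (Fin n) ℂ, IsMultiaffine f →
      (∀ σ ∈ G, rename ⇑σ f = f) →
      ∀ ζ : Fin n → ℂ, (∀ i, 0 < (ζ i).im) →
        ∃ z : ℂ, 0 < z.im ∧ eval ζ f = eval (fun _ => z) f) :
    ∀ i j : Fin n, ∃ σ ∈ G, σ i = j := by
  intro i j
  by_contra! h
  have hj : j ∉ MulAction.orbit G i := fun ⟨σ, hσ⟩ => h σ σ.2 hσ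
  obtain ⟨c, hc, hsum, hcj⟩ := exists_invariant_sum_eq_zero_of_notMem_orbit G hj
  exact hcj (congrFun (HasCoincidenceProperty.eq_zero_of_invariant_of_sum_eq_zero hG hc hsum) j)

/-- If every multiaffine G-invariant polynomial satisfies the coincidence property
on the open upper half-plane, then G acts transitively on {1,…,n}. -/
theorem coincidence_property_implies_transitive
    (n : ℕ) (hn : 1 ≤ n) (G : Subgroup (Equiv.Perm (Fin n)))
    (hG : ∀ f : MvPolynomial (Fin n) ℂ, IsMultiaffine f →
      (∀ σ ∈ G, rename ⇑σ f = f) →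
      ∀ ζ : Fin n → ℂ, (∀ i, 0 < (ζ i).im) →
        ∃ z : ℂ, 0 < z.im ∧ eval ζ f = eval (fun _ => z) f) :
    ∀ i j : Fin n, ∃ σ ∈ G, σ i = j :=
  coincidence_property_implies_transitive_general n G hG
end
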